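/- arXiv:1806.10544 — 6 statements merged into one kernel-verified Lean document; each statement's English description precedes it below -/
import Mathlib

section
/- Let F be a field, let G(λ) ∈ F(λ)^{p×m} be a rational matrix, and let 𝓛_1(λ) = [[A_1λ+A_0, B_1λ+B_0], [−(C_1λ+C_0), D_1λ+D_0]] ∈ F[λ]^{(n+(p+s))×(n+(m+s))} be a strong linearization of G(λ). Let Q_1, Q_3 ∈ F^{n×n}, Q_2 ∈ F^{(p+s)×(p+s)}, Q_4 ∈ F^{(m+s)×(m+s)} be nonsingular matrices, W ∈ F^{(p+s)×n} and Z ∈ F^{n×(m+s)}. Then the pencil 𝓛_2(λ) := [[Q_1, 0],[W, Q_2]] · 𝓛_1(λ) · [[Q_3, Z],[0, Q_4]] is a strong linearization of G(λ). -/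
open Matrix

/-- A square polynomial matrix is unimodular if its determinant is a nonzero constant. -/
def Unimodular {F : Type*} [Field F] {ι : Type*} [Fintype ι] [DecidableEq ι]
    (U : Matrix ι ι (Polynomial F)) : Prop :=
  ∃ c : F, c ≠ 0 ∧ U.det = Polynomial.C c

/-- A rational function is proper if the degree of its numerator is at most the degree of
its denominator. -/
def ProperRF {F : Type*} [Field F] (r : RatFunc F) : Prop := r.intDegree ≤ 0

/-- A rational function is biproper if its numerator and denominator have the same degree. -/
def BiproperRF {F : Type*} [Field F] (r : RatFunc F) : Prop := r ≠ 0 ∧ r.intDegree = 0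

/-- A square rational matrix is biproper if all its entries are proper and its determinant
is biproper. -/
def BiproperMatrix {F : Type*} [Field F] {ι : Type*} [Fintype ι] [DecidableEq ι]
    (M : Matrix ι ι (RatFunc F)) : Prop :=
  (∀ i j, ProperRF (M i j)) ∧ BiproperRF M.det

/-- The polynomial part of a rational function: the quotient in the division of its
numerator by its (monic) denominator. -/
noncomputable def polyPart {F : Type*} [Field F] (r : RatFunc F) : Polynomial F :=
  r.num /ₘ r.denom

open Classical in
/-- `g(R) = min(0, q₁(R))`: minus the degree of the polynomial part of the rational matrix
`R` if that polynomial part is nonzero, and `0` otherwise. -/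
noncomputable def gOrder {F : Type*} [Field F] {ι κ : Type*} [Fintype ι] [Fintype κ]
    (R : Matrix ι κ (RatFunc F)) : ℤ :=
  if ∀ i j, polyPart (R i j) = 0 then 0
  else -((Finset.univ.sup fun ij : ι × κ => (polyPart (R ij.1 ij.2)).natDegree : ℕ) : ℤ)

/-- `n` is the least order `ν(G)` of the rational matrix `G`: the minimum of
`deg(det A(λ))` over all polynomial system matrices `[[A, B], [-C, D]]` with
`G = D + C A⁻¹ B` and `det A ≠ 0`. -/
def IsLeastOrder {F : Type*} [Field F] {p q : ℕ}
    (G : Matrix (Fin p) (Fin q) (RatFunc F)) (n : ℕ) : Prop :=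
  (∃ (N : ℕ) (A : Matrix (Fin N) (Fin N) (Polynomial F))
      (B : Matrix (Fin N) (Fin q) (Polynomial F)) (C : Matrix (Fin p) (Fin N) (Polynomial F))
      (D : Matrix (Fin p) (Fin q) (Polynomial F)),
      A.det ≠ 0 ∧ A.det.natDegree = n ∧
      G = D.map (algebraMap (Polynomial F) (RatFunc F))
        + C.map (algebraMap (Polynomial F) (RatFunc F))
          * (A.map (algebraMap (Polynomial F) (RatFunc F)))⁻¹
          * B.map (algebraMap (Polynomial F) (RatFunc F))) ∧
  ∀ (N : ℕ) (A : Matrix (Fin N) (Fin N) (Polynomial F))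
      (B : Matrix (Fin N) (Fin q) (Polynomial F)) (C : Matrix (Fin p) (Fin N) (Polynomial F))
      (D : Matrix (Fin p) (Fin q) (Polynomial F)),
      A.det ≠ 0 →
      G = D.map (algebraMap (Polynomial F) (RatFunc F))
        + C.map (algebraMap (Polynomial F) (RatFunc F))
          * (A.map (algebraMap (Polynomial F) (RatFunc F)))⁻¹
          * B.map (algebraMap (Polynomial F) (RatFunc F)) →
      n ≤ A.det.natDegree

/-- `L(λ) = [[A(λ), B(λ)], [-C(λ), D(λ)]] ∈ F[λ]^{(n+(p+s))×(n+(m+s))}` is a strong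
linearization of the rational matrix `G ∈ F(λ)^{p×m}`:  it is a pencil, `n = ν(G)`,
`det A(λ) ≠ 0` if `n > 0`, and, with `Ĝ = D + C A⁻¹ B` its transfer function,
`U₁ diag(G, I_s) U₂ = Ĝ` for some unimodular `U₁, U₂` and
`B₁ diag(λ^{g(G)} G, I_s) B₂ = λ^{g(Ĝ)} Ĝ` for some biproper `B₁, B₂`. -/
def IsStrongLinearization {F : Type*} [Field F] {p m n s : ℕ}
    (G : Matrix (Fin p) (Fin m) (RatFunc F))
    (L : Matrix (Fin n ⊕ (Fin p ⊕ Fin s)) (Fin n ⊕ (Fin m ⊕ Fin s)) (Polynomial F)) : Prop :=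
  (∀ i j, (L i j).natDegree ≤ 1) ∧
  IsLeastOrder G n ∧
  (0 < n → L.toBlocks₁₁.det ≠ 0) ∧
  (let Ghat : Matrix (Fin p ⊕ Fin s) (Fin m ⊕ Fin s) (RatFunc F) :=
    L.toBlocks₂₂.map (algebraMap (Polynomial F) (RatFunc F))
      - L.toBlocks₂₁.map (algebraMap (Polynomial F) (RatFunc F))
        * (L.toBlocks₁₁.map (algebraMap (Polynomial F) (RatFunc F)))⁻¹
        * L.toBlocks₁₂.map (algebraMap (Polynomial F) (RatFunc F))
   (∃ (U₁ : Matrix (Fin p ⊕ Fin s) (Fin p ⊕ Fin s) (Polynomial F))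
      (U₂ : Matrix (Fin m ⊕ Fin s) (Fin m ⊕ Fin s) (Polynomial F)),
      Unimodular U₁ ∧ Unimodular U₂ ∧
      U₁.map (algebraMap (Polynomial F) (RatFunc F))
          * Matrix.fromBlocks G 0 0 (1 : Matrix (Fin s) (Fin s) (RatFunc F))
          * U₂.map (algebraMap (Polynomial F) (RatFunc F)) = Ghat) ∧
   (∃ (B₁ : Matrix (Fin p ⊕ Fin s) (Fin p ⊕ Fin s) (RatFunc F))
      (B₂ : Matrix (Fin m ⊕ Fin s) (Fin m ⊕ Fin s) (RatFunc F)),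
      BiproperMatrix B₁ ∧ BiproperMatrix B₂ ∧
      B₁ * Matrix.fromBlocks
          (Matrix.of fun i j => (RatFunc.X : RatFunc F) ^ gOrder G * G i j) 0 0
            (1 : Matrix (Fin s) (Fin s) (RatFunc F)) * B₂
        = Matrix.of fun i j => (RatFunc.X : RatFunc F) ^ gOrder Ghat * Ghat i j))

/-!
Write `𝓛₁ = [[A, B], [-C, D]]`. Multiplying by the block-triangular constant matrices conjugates
`A` by constants, keeps the pencil shape and the least order, and turns the transfer function
`Ĝ₁ = D + C A⁻¹ B` into `Q₂ Ĝ₁ Q₄`: in the Schur complement the contributions of `W` and `Z`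
cancel. Constant invertible matrices are unimodular and biproper, so both equivalences with
`diag(G, I)` survive multiplication by `Q₂` and `Q₄`. Finally `g(Q₂ Ĝ₁ Q₄) = g(Ĝ₁)`: the
polynomial part commutes with constant matrices, since `polyPart r` is the unique polynomial `q`
with `v∞(r - q) < 1` for the valuation `v∞` at infinity of `F(λ)`, and invertible constant
matrices do not change the largest degree of the entries of a polynomial matrix.
-/

open Polynomial
open RatFunc hiding C X

section

variable {F : Type*} [Field F]

section Valuation

variable [DecidableEq (RatFunc F)]

theorem properRF_iff_inftyValuation_le_one {r : RatFunc F} :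
    ProperRF r ↔ inftyValuation F r ≤ 1 := by
  rcases eq_or_ne r 0 with rfl | hr
  · simp [ProperRF]
  · rw [ProperRF, inftyValuation_apply, inftyValuation_of_nonzero F hr, ← WithZero.exp_zero,
      WithZero.exp_le_exp]

theorem biproperRF_iff_inftyValuation_eq_one {r : RatFunc F} :
    BiproperRF r ↔ inftyValuation F r = 1 := by
  rcases eq_or_ne r 0 with rfl | hr
  · simp [BiproperRF]
  · rw [BiproperRF, inftyValuation_apply, inftyValuation_of_nonzero F hr, WithZero.exp_eq_one,
      and_iff_right hr]

theorem inftyValuation_algebraMap_lt_one_iff {q : F[X]} :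
    inftyValuation F (algebraMap F[X] (RatFunc F) q) < 1 ↔ q = 0 := by
  refine ⟨fun h => by_contra fun hq => ?_, fun h => by simp [h]⟩
  rw [inftyValuation_apply, inftyValuation.polynomial F hq, ← WithZero.exp_zero,
    WithZero.exp_lt_exp] at h
  omega

theorem inftyValuation_sub_polyPart_lt_one (r : RatFunc F) :
    inftyValuation F (r - algebraMap F[X] (RatFunc F) (polyPart r)) < 1 := by
  have hden : algebraMap F[X] (RatFunc F) r.denom ≠ 0 :=
    RatFunc.algebraMap_ne_zero r.denom_ne_zero
  have hrem : r - algebraMap F[X] (RatFunc F) (polyPart r)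
      = algebraMap F[X] (RatFunc F) (r.num %ₘ r.denom) / algebraMap F[X] (RatFunc F) r.denom := by
    have hnum : r * algebraMap F[X] (RatFunc F) r.denom = algebraMap F[X] (RatFunc F) r.num :=
      ((div_eq_iff hden).mp r.num_div_denom).symm
    rw [eq_div_iff hden, sub_mul, hnum, ← map_mul, ← map_sub, polyPart]
    congr 1
    linear_combination (modByMonic_add_div r.num r.denom).symm
  rcases eq_or_ne (r.num %ₘ r.denom) 0 with h0 | h0
  · simp [hrem, h0]
  rw [hrem, map_div₀, div_lt_one₀ ((Valuation.pos_iff _).mpr hden), inftyValuation_apply,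
    inftyValuation_apply, inftyValuation.polynomial F h0,
    inftyValuation.polynomial F r.denom_ne_zero, WithZero.exp_lt_exp, Nat.cast_lt]
  exact natDegree_lt_natDegree h0 (degree_modByMonic_lt _ r.monic_denom)

theorem polyPart_eq_of_inftyValuation_sub_lt_one {r : RatFunc F} {q : F[X]}
    (h : inftyValuation F (r - algebraMap F[X] (RatFunc F) q) < 1) : polyPart r = q := by
  have hdiff : inftyValuation F (algebraMap F[X] (RatFunc F) (q - polyPart r)) < 1 := by
    rw [map_sub, ← sub_sub_sub_cancel_left _ _ r]
    exact Valuation.map_sub_lt _ (inftyValuation_sub_polyPart_lt_one r) h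
  exact (sub_eq_zero.mp (inftyValuation_algebraMap_lt_one_iff.mp hdiff)).symm

end Valuation

theorem polyPart_add (a b : RatFunc F) : polyPart (a + b) = polyPart a + polyPart b := by
  classical
  apply polyPart_eq_of_inftyValuation_sub_lt_one
  rw [map_add, add_sub_add_comm]
  exact Valuation.map_add_lt _ (inftyValuation_sub_polyPart_lt_one a)
    (inftyValuation_sub_polyPart_lt_one b)

theorem polyPart_algebraMap_mul (c : F) (r : RatFunc F) :
    polyPart (algebraMap F (RatFunc F) c * r) = C c * polyPart r := by
  classical
  apply polyPart_eq_of_inftyValuation_sub_lt_one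
  rw [map_mul, algebraMap_C, ← algebraMap_eq_C, ← mul_sub, map_mul]
  exact (mul_le_of_le_one_left' (Valuation.IsTrivialOn.valuation_algebraMap_le_one _ c)).trans_lt
    (inftyValuation_sub_polyPart_lt_one r)

theorem polyPart_sum {ι : Type*} (s : Finset ι) (f : ι → RatFunc F) :
    polyPart (∑ i ∈ s, f i) = ∑ i ∈ s, polyPart (f i) :=
  map_sum (AddMonoidHom.mk' polyPart polyPart_add) f s

theorem polyPart_mul_algebraMap (r : RatFunc F) (c : F) :
    polyPart (r * algebraMap F (RatFunc F) c) = polyPart r * C c := by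
  rw [mul_comm, polyPart_algebraMap_mul, mul_comm]

section ConstantMatrices

variable {ι ι' κ κ' : Type*} [Fintype ι'] [Fintype κ']

theorem map_polyPart_const_mul_mul_const (P : Matrix ι ι' F) (R : Matrix ι' κ' (RatFunc F))
    (Q : Matrix κ' κ F) :
    (P.map (algebraMap F (RatFunc F)) * R * Q.map (algebraMap F (RatFunc F))).map polyPart
      = P.map C * R.map polyPart * Q.map C := by
  ext i j
  simp only [map_apply, mul_apply, Finset.sum_mul, polyPart_sum, polyPart_mul_algebraMap,
    polyPart_algebraMap_mul]

theorem natDegree_const_mul_mul_const_apply_le (P : Matrix ι ι' F) (N : Matrix ι' κ' F[X])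
    (Q : Matrix κ' κ F) {d : ℕ} (hN : ∀ k l, (N k l).natDegree ≤ d) (i : ι) (j : κ) :
    ((P.map C * N * Q.map C) i j).natDegree ≤ d := by
  refine natDegree_sum_le_of_forall_le _ _ fun l _ => (natDegree_mul_C_le _ _).trans ?_
  exact natDegree_sum_le_of_forall_le _ _ fun k _ => (natDegree_C_mul_le _ _).trans (hN k l)

end ConstantMatrices

section MaxNatDegree

variable {ι κ : Type*} [Fintype ι] [Fintype κ]

def maxNatDegree (N : Matrix ι κ F[X]) : ℕ :=
  Finset.univ.sup fun ij : ι × κ => (N ij.1 ij.2).natDegree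

theorem natDegree_le_maxNatDegree (N : Matrix ι κ F[X]) (i : ι) (j : κ) :
    (N i j).natDegree ≤ maxNatDegree N :=
  Finset.le_sup (f := fun ij : ι × κ => (N ij.1 ij.2).natDegree) (Finset.mem_univ (i, j))

theorem maxNatDegree_le_iff {N : Matrix ι κ F[X]} {d : ℕ} :
    maxNatDegree N ≤ d ↔ ∀ i j, (N i j).natDegree ≤ d := by
  simp [maxNatDegree, Finset.sup_le_iff]

theorem gOrder_eq_neg_maxNatDegree (R : Matrix ι κ (RatFunc F)) :
    gOrder R = -(maxNatDegree (R.map polyPart) : ℤ) := by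
  classical
  unfold gOrder
  split_ifs with h
  · simp [maxNatDegree, h]
  · rfl

theorem maxNatDegree_const_mul_mul_const_le (P : Matrix ι ι F) (Q : Matrix κ κ F)
    (N : Matrix ι κ F[X]) : maxNatDegree (P.map C * N * Q.map C) ≤ maxNatDegree N :=
  maxNatDegree_le_iff.mpr <|
    natDegree_const_mul_mul_const_apply_le P N Q (natDegree_le_maxNatDegree N)

variable [DecidableEq ι] [DecidableEq κ]

theorem maxNatDegree_const_mul_mul_const {P : Matrix ι ι F} {Q : Matrix κ κ F}
    (hP : IsUnit P.det) (hQ : IsUnit Q.det) (N : Matrix ι κ F[X]) :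
    maxNatDegree (P.map C * N * Q.map C) = maxNatDegree N := by
  have hcancel : P⁻¹.map C * (P.map C * N * Q.map C) * Q⁻¹.map C = N := by
    simp only [← RingHom.mapMatrix_apply, Matrix.mul_assoc, ← map_mul, Matrix.mul_nonsing_inv _ hQ,
      ← Matrix.mul_assoc (C.mapMatrix P⁻¹), Matrix.nonsing_inv_mul _ hP, map_one, Matrix.one_mul,
      Matrix.mul_one]
  refine (maxNatDegree_const_mul_mul_const_le P Q N).antisymm ?_
  calc maxNatDegree N = maxNatDegree (P⁻¹.map C * (P.map C * N * Q.map C) * Q⁻¹.map C) := by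
        rw [hcancel]
    _ ≤ _ := maxNatDegree_const_mul_mul_const_le _ _ _

theorem gOrder_const_mul_mul_const {P : Matrix ι ι F} {Q : Matrix κ κ F}
    (hP : IsUnit P.det) (hQ : IsUnit Q.det) (R : Matrix ι κ (RatFunc F)) :
    gOrder (P.map (algebraMap F (RatFunc F)) * R * Q.map (algebraMap F (RatFunc F))) =
      gOrder R := by
  rw [gOrder_eq_neg_maxNatDegree, gOrder_eq_neg_maxNatDegree, map_polyPart_const_mul_mul_const,
    maxNatDegree_const_mul_mul_const hP hQ]

end MaxNatDegree

theorem map_C_map_algebraMap {ι κ : Type*} (P : Matrix ι κ F) :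
    (P.map C).map (algebraMap F[X] (RatFunc F)) = P.map (algebraMap F (RatFunc F)) := by
  ext i j
  simp [algebraMap_C, algebraMap_eq_C]

section SquareMatrices

variable {ι : Type*} [Fintype ι] [DecidableEq ι]

theorem Unimodular.mul {U V : Matrix ι ι F[X]} (hU : Unimodular U) (hV : Unimodular V) :
    Unimodular (U * V) := by
  obtain ⟨a, ha, hUa⟩ := hU
  obtain ⟨b, hb, hVb⟩ := hV
  exact ⟨a * b, mul_ne_zero ha hb, by rw [det_mul, hUa, hVb, C_mul]⟩

theorem unimodular_map_C {P : Matrix ι ι F} (hP : IsUnit P.det) : Unimodular (P.map C) :=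
  ⟨P.det, hP.ne_zero, (RingHom.map_det C P).symm⟩

theorem BiproperMatrix.mul {M N : Matrix ι ι (RatFunc F)} (hM : BiproperMatrix M)
    (hN : BiproperMatrix N) : BiproperMatrix (M * N) := by
  classical
  simp only [BiproperMatrix, properRF_iff_inftyValuation_le_one,
    biproperRF_iff_inftyValuation_eq_one] at *
  refine ⟨fun i j => ?_, by rw [det_mul, map_mul, hM.2, hN.2, one_mul]⟩
  -- proper functions form the valuation ring of the place at infinity
  exact (inftyValuation F).integer.sum_mem fun k _ => mul_mem (hM.1 i k) (hN.1 k j)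

theorem biproperMatrix_map_algebraMap {P : Matrix ι ι F} (hP : IsUnit P.det) :
    BiproperMatrix (P.map (algebraMap F (RatFunc F))) := by
  classical
  refine ⟨fun i j => properRF_iff_inftyValuation_le_one.mpr
    (Valuation.IsTrivialOn.valuation_algebraMap_le_one _ (P i j)), ?_⟩
  rw [biproperRF_iff_inftyValuation_eq_one, ← RingHom.mapMatrix_apply, ← RingHom.map_det]
  exact Valuation.IsTrivialOn.eq_one _ hP.ne_zero

end SquareMatrices

section Equivalence

variable {ι κ : Type*} [Fintype ι] [DecidableEq ι] [Fintype κ] [DecidableEq κ]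

def IsUnimodularlyEquivalent (X Y : Matrix ι κ (RatFunc F)) : Prop :=
  ∃ (U₁ : Matrix ι ι F[X]) (U₂ : Matrix κ κ F[X]), Unimodular U₁ ∧ Unimodular U₂ ∧
    U₁.map (algebraMap F[X] (RatFunc F)) * X * U₂.map (algebraMap F[X] (RatFunc F)) = Y

def IsEquivalentAtInfinity (X Y : Matrix ι κ (RatFunc F)) : Prop :=
  ∃ (B₁ : Matrix ι ι (RatFunc F)) (B₂ : Matrix κ κ (RatFunc F)),
    BiproperMatrix B₁ ∧ BiproperMatrix B₂ ∧ B₁ * X * B₂ = Y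

variable {P : Matrix ι ι F} {Q : Matrix κ κ F} {X Y : Matrix ι κ (RatFunc F)}

theorem IsUnimodularlyEquivalent.const_mul_mul_const (hP : IsUnit P.det) (hQ : IsUnit Q.det)
    (h : IsUnimodularlyEquivalent X Y) :
    IsUnimodularlyEquivalent X
      (P.map (algebraMap F (RatFunc F)) * Y * Q.map (algebraMap F (RatFunc F))) := by
  obtain ⟨U₁, U₂, hU₁, hU₂, rfl⟩ := h
  refine ⟨P.map C * U₁, U₂ * Q.map C, (unimodular_map_C hP).mul hU₁,
    hU₂.mul (unimodular_map_C hQ), ?_⟩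
  simp only [Matrix.map_mul, map_C_map_algebraMap, Matrix.mul_assoc]

theorem IsEquivalentAtInfinity.const_mul_mul_const (hP : IsUnit P.det) (hQ : IsUnit Q.det)
    (h : IsEquivalentAtInfinity X Y) :
    IsEquivalentAtInfinity X
      (P.map (algebraMap F (RatFunc F)) * Y * Q.map (algebraMap F (RatFunc F))) := by
  obtain ⟨B₁, B₂, hB₁, hB₂, rfl⟩ := h
  refine ⟨P.map (algebraMap F (RatFunc F)) * B₁, B₂ * Q.map (algebraMap F (RatFunc F)),
    (biproperMatrix_map_algebraMap hP).mul hB₁, hB₂.mul (biproperMatrix_map_algebraMap hQ), ?_⟩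
  simp only [Matrix.mul_assoc]

theorem zpow_gOrder_smul_const_mul_mul_const (hP : IsUnit P.det) (hQ : IsUnit Q.det)
    (R : Matrix ι κ (RatFunc F)) :
    (RatFunc.X : RatFunc F) ^
        gOrder (P.map (algebraMap F (RatFunc F)) * R * Q.map (algebraMap F (RatFunc F))) •
        (P.map (algebraMap F (RatFunc F)) * R * Q.map (algebraMap F (RatFunc F)))
      = P.map (algebraMap F (RatFunc F)) * ((RatFunc.X : RatFunc F) ^ gOrder R • R) *
          Q.map (algebraMap F (RatFunc F)) := by
  rw [gOrder_const_mul_mul_const hP hQ, Matrix.mul_smul, Matrix.smul_mul]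

end Equivalence

section SchurComplement

variable {K : Type*} [CommRing K] {ν ρ μ : Type*} [Fintype ν] [Fintype ρ] [Fintype μ]
  (P₁ P₃ : Matrix ν ν K) (P₂ : Matrix ρ ρ K) (P₄ : Matrix μ μ K) (W : Matrix ρ ν K)
  (Z : Matrix ν μ K) (M : Matrix (ν ⊕ ρ) (ν ⊕ μ) K)

theorem fromBlocks_mul_mul_fromBlocks :
    fromBlocks P₁ 0 W P₂ * M * fromBlocks P₃ Z 0 P₄ =
      fromBlocks (P₁ * M.toBlocks₁₁ * P₃) (P₁ * M.toBlocks₁₁ * Z + P₁ * M.toBlocks₁₂ * P₄)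
        ((W * M.toBlocks₁₁ + P₂ * M.toBlocks₂₁) * P₃)
        ((W * M.toBlocks₁₁ + P₂ * M.toBlocks₂₁) * Z +
          (W * M.toBlocks₁₂ + P₂ * M.toBlocks₂₂) * P₄) := by
  conv_lhs => rw [← fromBlocks_toBlocks M]
  simp only [fromBlocks_multiply, Matrix.zero_mul, Matrix.mul_zero, add_zero]

theorem toBlocks₁₁_fromBlocks_mul_mul_fromBlocks :
    (fromBlocks P₁ 0 W P₂ * M * fromBlocks P₃ Z 0 P₄).toBlocks₁₁ = P₁ * M.toBlocks₁₁ * P₃ := by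
  rw [fromBlocks_mul_mul_fromBlocks, toBlocks_fromBlocks₁₁]

variable [DecidableEq ν]

noncomputable def schurComplement (M : Matrix (ν ⊕ ρ) (ν ⊕ μ) K) : Matrix ρ μ K :=
  M.toBlocks₂₂ - M.toBlocks₂₁ * M.toBlocks₁₁⁻¹ * M.toBlocks₁₂

theorem schurComplement_fromBlocks_mul_mul_fromBlocks (hA : IsUnit M.toBlocks₁₁.det)
    (h₁ : IsUnit P₁.det) (h₃ : IsUnit P₃.det) :
    schurComplement (fromBlocks P₁ 0 W P₂ * M * fromBlocks P₃ Z 0 P₄) =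
      P₂ * schurComplement M * P₄ := by
  have cancel_left : ∀ {X : Matrix ν ν K}, IsUnit X.det → ∀ Y : Matrix ν μ K, X⁻¹ * (X * Y) = Y :=
    fun hX Y => by rw [← Matrix.mul_assoc, nonsing_inv_mul _ hX, Matrix.one_mul]
  have cancel_right : ∀ {X : Matrix ν ν K}, IsUnit X.det → ∀ Y : Matrix ν μ K, X * (X⁻¹ * Y) = Y :=
    fun hX Y => by rw [← Matrix.mul_assoc, mul_nonsing_inv _ hX, Matrix.one_mul]
  rw [schurComplement, schurComplement, fromBlocks_mul_mul_fromBlocks, toBlocks_fromBlocks₁₁,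
    toBlocks_fromBlocks₁₂, toBlocks_fromBlocks₂₁, toBlocks_fromBlocks₂₂, Matrix.mul_inv_rev,
    Matrix.mul_inv_rev]
  simp only [Matrix.mul_add, Matrix.add_mul, Matrix.mul_sub, Matrix.sub_mul, Matrix.mul_assoc,
    cancel_left h₁, cancel_right h₃, cancel_left hA, cancel_right hA]
  abel

end SchurComplement

section Pencils

variable {ν ρ μ : Type*} [Fintype ν] [Fintype ρ] [Fintype μ]
  (P₁ P₃ : Matrix ν ν F) (P₂ : Matrix ρ ρ F) (P₄ : Matrix μ μ F) (W : Matrix ρ ν F)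
  (Z : Matrix ν μ F) (L : Matrix (ν ⊕ ρ) (ν ⊕ μ) F[X])

theorem toBlocks₁₁_map_C_fromBlocks_mul_mul_fromBlocks :
    ((fromBlocks P₁ 0 W P₂).map C * L * (fromBlocks P₃ Z 0 P₄).map C).toBlocks₁₁ =
      P₁.map C * L.toBlocks₁₁ * P₃.map C := by
  simp only [fromBlocks_map, Matrix.map_zero _ C_0, toBlocks₁₁_fromBlocks_mul_mul_fromBlocks]

variable [DecidableEq ν]

noncomputable def transferFunction (L : Matrix (ν ⊕ ρ) (ν ⊕ μ) F[X]) : Matrix ρ μ (RatFunc F) :=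
  schurComplement (L.map (algebraMap F[X] (RatFunc F)))

theorem transferFunction_map_C_fromBlocks_mul_mul_fromBlocks (hA : L.toBlocks₁₁.det ≠ 0)
    (h₁ : IsUnit P₁.det) (h₃ : IsUnit P₃.det) :
    transferFunction ((fromBlocks P₁ 0 W P₂).map C * L * (fromBlocks P₃ Z 0 P₄).map C) =
      P₂.map (algebraMap F (RatFunc F)) * transferFunction L *
        P₄.map (algebraMap F (RatFunc F)) := by
  have isUnit_det_map : ∀ {X : Matrix ν ν F}, IsUnit X.det →
      IsUnit (X.map (algebraMap F (RatFunc F))).det := fun hX => by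
    rw [← RingHom.mapMatrix_apply, ← RingHom.map_det]
    exact hX.map _
  have hA' : IsUnit (L.map (algebraMap F[X] (RatFunc F))).toBlocks₁₁.det := by
    change IsUnit (L.toBlocks₁₁.map (algebraMap F[X] (RatFunc F))).det
    rw [← RingHom.mapMatrix_apply, ← RingHom.map_det]
    exact isUnit_iff_ne_zero.mpr (RatFunc.algebraMap_ne_zero hA)
  simp only [transferFunction, Matrix.map_mul, fromBlocks_map, map_C_map_algebraMap,
    Matrix.map_zero, map_zero]
  exact schurComplement_fromBlocks_mul_mul_fromBlocks _ _ _ _ _ _ _ hA' (isUnit_det_map h₁)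
    (isUnit_det_map h₃)

end Pencils

theorem isStrongLinearization_iff {p m n s : ℕ} {G : Matrix (Fin p) (Fin m) (RatFunc F)}
    {L : Matrix (Fin n ⊕ (Fin p ⊕ Fin s)) (Fin n ⊕ (Fin m ⊕ Fin s)) F[X]} :
    IsStrongLinearization G L ↔
      (∀ i j, (L i j).natDegree ≤ 1) ∧ IsLeastOrder G n ∧ (0 < n → L.toBlocks₁₁.det ≠ 0) ∧
      IsUnimodularlyEquivalent (fromBlocks G 0 0 1) (transferFunction L) ∧
      IsEquivalentAtInfinity (fromBlocks ((RatFunc.X : RatFunc F) ^ gOrder G • G) 0 0 1)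
        ((RatFunc.X : RatFunc F) ^ gOrder (transferFunction L) • transferFunction L) :=
  Iff.rfl

end

/-- If `𝓛₁(λ)` is a strong linearization of the rational matrix `G(λ)`,
then so is `𝓛₂(λ) = [[Q₁, 0], [W, Q₂]] 𝓛₁(λ) [[Q₃, Z], [0, Q₄]]` for any nonsingular
`Q₁, Q₂, Q₃, Q₄` and arbitrary `W, Z`. -/
theorem isStrongLinearization_of_strict_equivalence
    {F : Type*} [Field F] {p m n s : ℕ}
    (G : Matrix (Fin p) (Fin m) (RatFunc F))
    (L₁ : Matrix (Fin n ⊕ (Fin p ⊕ Fin s)) (Fin n ⊕ (Fin m ⊕ Fin s)) (Polynomial F))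
    (h : IsStrongLinearization G L₁)
    (Q₁ Q₃ : Matrix (Fin n) (Fin n) F)
    (Q₂ : Matrix (Fin p ⊕ Fin s) (Fin p ⊕ Fin s) F)
    (Q₄ : Matrix (Fin m ⊕ Fin s) (Fin m ⊕ Fin s) F)
    (hQ₁ : IsUnit Q₁.det) (hQ₂ : IsUnit Q₂.det) (hQ₃ : IsUnit Q₃.det) (hQ₄ : IsUnit Q₄.det)
    (W : Matrix (Fin p ⊕ Fin s) (Fin n) F)
    (Z : Matrix (Fin n) (Fin m ⊕ Fin s) F) :
    IsStrongLinearization G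
      ((Matrix.fromBlocks Q₁ 0 W Q₂).map Polynomial.C * L₁ *
        (Matrix.fromBlocks Q₃ Z 0 Q₄).map Polynomial.C) := by
  rw [isStrongLinearization_iff] at h ⊢
  obtain ⟨hpencil, hleast, hdet, hfinite, hinfinite⟩ := h
  have hA : L₁.toBlocks₁₁.det ≠ 0 := by
    rcases n.eq_zero_or_pos with rfl | hn
    · simp
    · exact hdet hn
  rw [transferFunction_map_C_fromBlocks_mul_mul_fromBlocks _ _ _ _ _ _ _ hA hQ₁ hQ₃,
    zpow_gOrder_smul_const_mul_mul_const hQ₂ hQ₄]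
  refine ⟨natDegree_const_mul_mul_const_apply_le _ L₁ _ hpencil, hleast, fun _ => ?_,
    hfinite.const_mul_mul_const hQ₂ hQ₄, hinfinite.const_mul_mul_const hQ₂ hQ₄⟩
  rw [toBlocks₁₁_map_C_fromBlocks_mul_mul_fromBlocks, det_mul, det_mul,
    ← RingHom.mapMatrix_apply, ← RingHom.mapMatrix_apply, ← RingHom.map_det, ← RingHom.map_det]
  exact mul_ne_zero (mul_ne_zero (C_ne_zero.mpr hQ₁.ne_zero) hA) (C_ne_zero.mpr hQ₃.ne_zero)
end

section
/- Let F be a field, k ≥ 2, and let Ũ(λ) ∈ F[λ]^{k×k} be the polynomial matrix obtained by stacking M_Φ(λ) on top of the row vector e_k^T = (0, …, 0, 1). Then det Ũ(λ) = (−1)^{k−1} α_0 α_1 ⋯ α_{k−2}, a nonzero constant, so Ũ(λ) is unimodular; moreover Ũ(λ)·Φ_k(λ) = e_k, i.e., Φ_k(λ) is the last column of Ũ(λ)^{−1}. Consequently U(λ) := Ũ(λ) ⊗ I_m is a unimodular km×km polynomial matrix and U(λ)·(Φ_k(λ)⊗I_m) = e_k⊗I_m. -/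
open Matrix
open scoped Kronecker

/-- The column vector `Φ_k(λ) ⊗ I_m` as a `km × m` polynomial matrix. -/
noncomputable def phiKron {F : Type*} [Field F] (φ : ℕ → Polynomial F) (k m : ℕ) :
    Matrix (Fin k × Fin m) (Fin m) (Polynomial F) :=
  Matrix.of fun p j => if p.2 = j then φ (k - 1 - (p.1 : ℕ)) else 0

/-- The pencil `M_Φ(λ) ∈ F[λ]^{(k-1)×k}`. -/
noncomputable def MPhiMat {F : Type*} [Field F] (α β γ : ℕ → F) (k : ℕ) :
    Matrix (Fin (k - 1)) (Fin k) (Polynomial F) :=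
  Matrix.of fun i j =>
    if (j : ℕ) = (i : ℕ) then -Polynomial.C (α (k - 2 - (i : ℕ)))
    else if (j : ℕ) = (i : ℕ) + 1 then Polynomial.X - Polynomial.C (β (k - 2 - (i : ℕ)))
    else if (j : ℕ) = (i : ℕ) + 2 then -Polynomial.C (γ (k - 2 - (i : ℕ)))
    else 0

/-- The matrix `Ũ(λ) ∈ F[λ]^{k×k}`: `M_Φ(λ)` stacked on top of the row `e_kᵀ = (0,…,0,1)`. -/
noncomputable def UtildeMat {F : Type*} [Field F] (α β γ : ℕ → F) (k : ℕ) :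
    Matrix (Fin k) (Fin k) (Polynomial F) :=
  Matrix.of fun i j =>
    if h : (i : ℕ) < k - 1 then MPhiMat α β γ k ⟨(i : ℕ), h⟩ j
    else if (j : ℕ) = k - 1 then 1 else 0

/-!
`Ũ(λ)` is upper triangular with diagonal `(-α_{k-2}, …, -α_0, 1)`, so its determinant is the
product of these entries. Row `i` of `M_Φ(λ) Φ_k(λ)` is the three-term recurrence at index
`k - 2 - i`, hence vanishes, while the last row of `Ũ(λ)` picks out `φ_0 = 1`. Finally
`(Ũ ⊗ I_m)(Φ_k ⊗ I_m) = (Ũ Φ_k) ⊗ I_m`, and `Ũ ⊗ I_m` is invertible together with `Ũ`.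
-/

theorem Fin.sum_ite_val_eq {M : Type*} [AddCommMonoid M] {k : ℕ} (c : ℕ) (f : Fin k → M) :
    (∑ j : Fin k, if (j : ℕ) = c then f j else 0) = if h : c < k then f ⟨c, h⟩ else 0 := by
  split_ifs with h
  · simp_rw [show ∀ j : Fin k, (j : ℕ) = c ↔ j = ⟨c, h⟩ from fun j => by rw [Fin.ext_iff]]
    simp
  · exact Finset.sum_eq_zero fun j _ => if_neg (by omega)

/-- The matrix `of fun p j => if p.2 = j then v p.1 else 0` is `v ⊗ I_μ`. -/
theorem kronecker_one_mul_of_ite {κ ι μ R : Type*} [Fintype ι] [Fintype μ] [DecidableEq μ]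
    [Semiring R] (A : Matrix κ ι R) (v : ι → R) :
    (A ⊗ₖ (1 : Matrix μ μ R)) * (of fun p j => if p.2 = j then v p.1 else 0 : Matrix (ι × μ) μ R)
      = of fun p j => if p.2 = j then (A *ᵥ v) p.1 else 0 := by
  refine Matrix.ext fun p j => ?_
  rw [mul_apply, Fintype.sum_prod_type]
  simp [one_apply, mulVec, dotProduct]

section

variable {F : Type*} [Field F]

theorem UtildeMat_isUpperTriangular (α β γ : ℕ → F) (k : ℕ) :
    (UtildeMat α β γ k).IsUpperTriangular := by
  intro i j hji
  have hji : (j : ℕ) < i := hji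
  simp only [UtildeMat, MPhiMat, of_apply]
  split_ifs <;> first | rfl | omega

theorem UtildeMat_apply_self (α β γ : ℕ → F) (k : ℕ) (i : Fin k) :
    UtildeMat α β γ k i i = if (i : ℕ) < k - 1 then -Polynomial.C (α (k - 2 - i)) else 1 := by
  simp only [UtildeMat, MPhiMat, of_apply]
  split_ifs <;> first | rfl | omega

theorem det_UtildeMat (α β γ : ℕ → F) (k : ℕ) :
    (UtildeMat α β γ k).det
      = Polynomial.C ((-1 : F) ^ (k - 1) * ∏ i ∈ Finset.range (k - 1), α i) := by
  rw [det_of_isUpperTriangular (UtildeMat_isUpperTriangular α β γ k)]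
  rcases k with _ | n
  · simp
  rw [Fin.prod_univ_castSucc]
  simp only [UtildeMat_apply_self, Fin.val_castSucc, Fin.val_last, Fin.is_lt, if_true,
    lt_irrefl, if_false, mul_one, Nat.add_sub_cancel]
  rw [Fin.prod_univ_eq_prod_range (fun i => -Polynomial.C (α (n + 1 - 2 - i))), Finset.prod_neg,
    Finset.card_range]
  have hreflect : ∀ i, n + 1 - 2 - i = n - 1 - i := fun i => by omega
  simp only [hreflect, Finset.prod_range_reflect (fun i => Polynomial.C (α i)), map_mul, map_pow,
    map_neg, map_one, map_prod]

theorem MPhiMat_mulVec_eq_zero {α β γ : ℕ → F} {φ : ℕ → Polynomial F} {k : ℕ}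
    (hrec : ∀ j : ℕ, Polynomial.C (α j) * φ (j + 1)
      = (Polynomial.X - Polynomial.C (β j)) * φ j
        - Polynomial.C (γ j) * (if j = 0 then 0 else φ (j - 1))) :
    MPhiMat α β γ k *ᵥ (fun j : Fin k => φ (k - 1 - j)) = 0 := by
  funext i
  have hi := i.isLt
  have entry : ∀ j : Fin k, MPhiMat α β γ k i j * φ (k - 1 - j)
      = (if (j : ℕ) = i then -Polynomial.C (α (k - 2 - i)) * φ (k - 1 - j) else 0)
        + (if (j : ℕ) = i + 1 then (Polynomial.X - Polynomial.C (β (k - 2 - i))) * φ (k - 1 - j)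
            else 0)
        + (if (j : ℕ) = i + 2 then -Polynomial.C (γ (k - 2 - i)) * φ (k - 1 - j) else 0) := by
    intro j
    simp only [MPhiMat, of_apply]
    split_ifs <;> first | omega | simp
  simp only [mulVec, dotProduct, entry, Pi.zero_apply, Finset.sum_add_distrib, Fin.sum_ite_val_eq,
    dif_pos (show (i : ℕ) < k by omega), dif_pos (show (i : ℕ) + 1 < k by omega)]
  -- the γ-term of the recurrence is present exactly when row `i + 2` exists
  have hr := hrec (k - 2 - i)
  rw [show k - 1 - (i : ℕ) = k - 2 - i + 1 by omega,
    show k - 1 - ((i : ℕ) + 1) = k - 2 - i by omega]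
  by_cases h : (i : ℕ) + 2 < k
  · rw [if_neg (by omega), show k - 2 - (i : ℕ) - 1 = k - 1 - (i + 2) by omega] at hr
    rw [dif_pos h]
    linear_combination -hr
  · rw [if_pos (by omega)] at hr
    rw [dif_neg h]
    linear_combination -hr

theorem UtildeMat_mulVec {α β γ : ℕ → F} {φ : ℕ → Polynomial F} {k : ℕ} (hk : 0 < k)
    (hφ0 : φ 0 = 1)
    (hrec : ∀ j : ℕ, Polynomial.C (α j) * φ (j + 1)
      = (Polynomial.X - Polynomial.C (β j)) * φ j
        - Polynomial.C (γ j) * (if j = 0 then 0 else φ (j - 1))) :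
    UtildeMat α β γ k *ᵥ (fun j : Fin k => φ (k - 1 - j))
      = fun i : Fin k => if (i : ℕ) = k - 1 then 1 else 0 := by
  funext i
  by_cases hi : (i : ℕ) < k - 1
  · have hrow : (UtildeMat α β γ k *ᵥ fun j : Fin k => φ (k - 1 - j)) i
        = (MPhiMat α β γ k *ᵥ fun j : Fin k => φ (k - 1 - j)) ⟨i, hi⟩ := by
      simp only [mulVec, dotProduct, UtildeMat, of_apply, dif_pos hi]
    rw [hrow, MPhiMat_mulVec_eq_zero hrec, if_neg hi.ne]
    rfl
  · simp only [mulVec, dotProduct, UtildeMat, of_apply, dif_neg hi, ite_mul, one_mul, zero_mul,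
      Fin.sum_ite_val_eq, dif_pos (Nat.sub_lt hk one_pos), if_pos (show (i : ℕ) = k - 1 by omega),
      Nat.sub_self, hφ0]

end

/-- `det Ũ(λ) = (−1)^{k−1} α_0 ⋯ α_{k−2}` is a nonzero constant, so `Ũ(λ)` is
unimodular; `Ũ(λ) Φ_k(λ) = e_k`; and `U(λ) = Ũ(λ) ⊗ I_m` is unimodular with
`U(λ)(Φ_k(λ) ⊗ I_m) = e_k ⊗ I_m`. -/
theorem Utilde_unimodular
    {F : Type*} [Field F] {k m : ℕ} (hk : 2 ≤ k)
    (α β γ : ℕ → F) (hα : ∀ j, α j ≠ 0)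
    (φ : ℕ → Polynomial F) (hφ0 : φ 0 = 1)
    (hrec : ∀ j : ℕ, Polynomial.C (α j) * φ (j + 1)
      = (Polynomial.X - Polynomial.C (β j)) * φ j
        - Polynomial.C (γ j) * (if j = 0 then 0 else φ (j - 1))) :
    (UtildeMat α β γ k).det
        = Polynomial.C ((-1 : F) ^ (k - 1) * ∏ i ∈ Finset.range (k - 1), α i) ∧
    ((-1 : F) ^ (k - 1) * ∏ i ∈ Finset.range (k - 1), α i) ≠ 0 ∧
    IsUnit (UtildeMat α β γ k).det ∧
    (UtildeMat α β γ k) *ᵥ (fun i : Fin k => φ (k - 1 - (i : ℕ)))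
        = (fun i : Fin k => if (i : ℕ) = k - 1 then 1 else 0) ∧
    IsUnit ((UtildeMat α β γ k) ⊗ₖ (1 : Matrix (Fin m) (Fin m) (Polynomial F))).det ∧
    ((UtildeMat α β γ k) ⊗ₖ (1 : Matrix (Fin m) (Fin m) (Polynomial F))) * phiKron φ k m
        = Matrix.of (fun (p : Fin k × Fin m) (j : Fin m) =>
            if (p.1 : ℕ) = k - 1 ∧ p.2 = j then 1 else 0) := by
  have hne : (-1 : F) ^ (k - 1) * ∏ i ∈ Finset.range (k - 1), α i ≠ 0 :=
    mul_ne_zero (pow_ne_zero _ (neg_ne_zero.mpr one_ne_zero))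
      (Finset.prod_ne_zero_iff.mpr fun i _ => hα i)
  have hunit : IsUnit (UtildeMat α β γ k).det := by
    rw [det_UtildeMat, Polynomial.isUnit_C]
    exact hne.isUnit
  have hmulVec := UtildeMat_mulVec (k := k) (by omega) hφ0 hrec
  refine ⟨det_UtildeMat α β γ k, hne, hunit, hmulVec, ?_, ?_⟩
  · rw [← isUnit_iff_isUnit_det] at hunit ⊢
    exact hunit.kronecker isUnit_one
  · rw [phiKron, kronecker_one_mul_of_ite (μ := Fin m) _ fun j : Fin k => φ (k - 1 - j),
      hmulVec]
    ext p j
    simp only [of_apply, ite_and]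
    split_ifs <;> rfl
end

section
/- Let F be a field, k ≥ 2, and let P(λ) = Σ_{i=0}^{k} P_i φ_i(λ) with P_i ∈ F^{m×m}. Then m_Φ^P(λ)·(Φ_k(λ)⊗I_m) = P(λ) and (M_Φ(λ)⊗I_m)·(Φ_k(λ)⊗I_m) = 0, and consequently F_Φ^P(λ)·(Φ_k(λ)⊗I_m) = e_1 ⊗ P(λ), where e_1 is the first canonical vector of F^k. -/
open Matrix
open scoped Kronecker

/-- The block row `m_Φ^P(λ) = [α_{k-1}⁻¹(λ-β_{k-1})P_k + P_{k-1},
P_{k-2} - α_{k-1}⁻¹γ_{k-1}P_k, P_{k-3}, …, P_1, P_0] ∈ F[λ]^{m×km}`. -/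
noncomputable def mPhiMat {F : Type*} [Field F] (α β γ : ℕ → F) (k m : ℕ)
    (P : ℕ → Matrix (Fin m) (Fin m) F) :
    Matrix (Fin m) (Fin k × Fin m) (Polynomial F) :=
  Matrix.of fun r c =>
    if (c.1 : ℕ) = 0 then
      Polynomial.C ((α (k - 1))⁻¹) * (Polynomial.X - Polynomial.C (β (k - 1)))
          * Polynomial.C (P k r c.2)
        + Polynomial.C (P (k - 1) r c.2)
    else if (c.1 : ℕ) = 1 then
      Polynomial.C (P (k - 2) r c.2)
        - Polynomial.C ((α (k - 1))⁻¹ * γ (k - 1)) * Polynomial.C (P k r c.2)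
    else Polynomial.C (P (k - 1 - (c.1 : ℕ)) r c.2)

/-- The pencil `F_Φ^P(λ) = [m_Φ^P(λ); M_Φ(λ) ⊗ I_m] ∈ F[λ]^{km×km}`, with first row block
`m_Φ^P(λ)` and remaining row blocks `M_Φ(λ) ⊗ I_m`. -/
noncomputable def FPhiMat {F : Type*} [Field F] (α β γ : ℕ → F) (k m : ℕ)
    (P : ℕ → Matrix (Fin m) (Fin m) F) :
    Matrix (Fin k × Fin m) (Fin k × Fin m) (Polynomial F) :=
  Matrix.of fun p q =>
    if h : (p.1 : ℕ) = 0 then mPhiMat α β γ k m P p.2 q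
    else
      MPhiMat α β γ k ⟨(p.1 : ℕ) - 1, by have := p.1.isLt; omega⟩ q.1
        * (if p.2 = q.2 then 1 else 0)

/-! Multiplying by the block column `Φ_k ⊗ I_m` reduces to scalar products with `Φ_k`. Row `i`
of `M_Φ` dotted with `Φ_k` is the recurrence at `j = k - 2 - i`, so it vanishes. In `m_Φ^P` each
`P_i` with `i < k` meets `φ_i`, and the extra multiples of `P_k` in the first two blocks meet
`φ_{k-1}` and `φ_{k-2}`, which the recurrence at `k - 1` combines into `P_k φ_k`. -/

open Polynomial

/-- The block column `v ⊗ Iₙ`. -/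
def colKronOne {R κ : Type*} [Zero R] (v : κ → R) (n : Type*) [DecidableEq n] :
    Matrix (κ × n) n R :=
  Matrix.of fun p c => if p.2 = c then v p.1 else 0

section ColKronOne

variable {R : Type*} [Semiring R] {l ι κ n : Type*} [Fintype κ] [Fintype n] [DecidableEq n]

theorem mul_colKronOne_apply (B : Matrix l (κ × n) R) (v : κ → R) (r : l) (c : n) :
    (B * colKronOne v n) r c = ∑ j, B r (j, c) * v j := by
  simp [Matrix.mul_apply, colKronOne, Fintype.sum_prod_type]

theorem kronecker_one_mul_colKronOne (A : Matrix ι κ R) (v : κ → R) :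
    (A ⊗ₖ (1 : Matrix n n R)) * colKronOne v n = colKronOne (A *ᵥ v) n := by
  ext ⟨i, r⟩ c
  rw [mul_colKronOne_apply]
  by_cases h : r = c <;> simp [colKronOne, one_apply, h, mulVec, dotProduct]

end ColKronOne

theorem Fin.sum_univ_ite_val_eq {M : Type*} [AddCommMonoid M] {k : ℕ} (t : ℕ) (f : Fin k → M) :
    ∑ j : Fin k, (if (j : ℕ) = t then f j else 0) = if h : t < k then f ⟨t, h⟩ else 0 := by
  split_ifs with h
  · rw [Finset.sum_eq_single_of_mem ⟨t, h⟩ (Finset.mem_univ _)] <;> simp +contextual [Fin.ext_iff]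
  · exact Finset.sum_eq_zero fun j _ => if_neg (by omega)

section ThreeTermRecurrence

variable {F : Type*} [Field F] {α β γ : ℕ → F} {φ : ℕ → F[X]}

def IsThreeTermRecurrence (α β γ : ℕ → F) (φ : ℕ → F[X]) : Prop :=
  ∀ j : ℕ, C (α j) * φ (j + 1) = (X - C (β j)) * φ j - C (γ j) * (if j = 0 then 0 else φ (j - 1))

theorem phiKron_eq_colKronOne (k m : ℕ) :
    phiKron φ k m = colKronOne (fun j : Fin k => φ (k - 1 - j)) (Fin m) := rfl

/-- For the last row (`k - 2 - i = 0`) the column `i + 2` does not exist, matching `φ_{-1} = 0`. -/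
theorem MPhiMat_mulVec_phi (k : ℕ) (hrec : IsThreeTermRecurrence α β γ φ) :
    MPhiMat α β γ k *ᵥ (fun j : Fin k => φ (k - 1 - j)) = 0 := by
  funext i
  have hi := i.isLt
  have row : ∀ j : Fin k, MPhiMat α β γ k i j =
      (if (j : ℕ) = i then -C (α (k - 2 - i)) else 0)
        + (if (j : ℕ) = i + 1 then X - C (β (k - 2 - i)) else 0)
        + (if (j : ℕ) = i + 2 then -C (γ (k - 2 - i)) else 0) := by
    intro j
    simp only [MPhiMat, of_apply]
    split_ifs <;> first | omega | simp
  simp only [mulVec, dotProduct, row, add_mul, ite_mul, zero_mul, Finset.sum_add_distrib,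
    Fin.sum_univ_ite_val_eq]
  rw [dif_pos (by omega), dif_pos (by omega), Pi.zero_apply]
  have h := hrec (k - 2 - i)
  rw [show k - 2 - i + 1 = k - 1 - i by omega] at h
  rw [show k - 1 - (i + 1) = k - 2 - i by omega, show k - 1 - (i + 2) = k - 2 - i - 1 by omega]
  split_ifs at h ⊢ with hlast hfirst hfirst
  · omega
  · linear_combination -h
  · linear_combination -h
  · omega

theorem MPhiMat_kronecker_one_mul_phiKron (k m : ℕ) (hrec : IsThreeTermRecurrence α β γ φ) :
    (MPhiMat α β γ k ⊗ₖ (1 : Matrix (Fin m) (Fin m) F[X])) * phiKron φ k m = 0 := by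
  rw [phiKron_eq_colKronOne, kronecker_one_mul_colKronOne, MPhiMat_mulVec_phi k hrec]
  ext
  simp [colKronOne]

/-- The coefficients `c_j` with `φ_k = c_0 φ_{k-1} + c_1 φ_{k-2}` given by the recurrence; in
`m_Φ^P` they multiply `P_k` in the first two blocks. -/
noncomputable def phiTopCoeffs (α β γ : ℕ → F) (k j : ℕ) : F[X] :=
  if j = 0 then C (α (k - 1))⁻¹ * (X - C (β (k - 1)))
  else if j = 1 then -C ((α (k - 1))⁻¹ * γ (k - 1)) else 0

theorem mPhiMat_apply (k m : ℕ) (P : ℕ → Matrix (Fin m) (Fin m) F) (r : Fin m) (j : Fin k)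
    (c : Fin m) :
    mPhiMat α β γ k m P r (j, c) = C (P (k - 1 - j) r c) + phiTopCoeffs α β γ k j * C (P k r c) := by
  simp only [mPhiMat, phiTopCoeffs, of_apply]
  split_ifs with h0 h1
  · rw [h0, Nat.sub_zero]; ring
  · rw [h1, Nat.sub_sub, C_mul]; ring
  · simp

theorem sum_phiTopCoeffs_mul (n : ℕ) (hα : α (n + 1) ≠ 0) (hrec : IsThreeTermRecurrence α β γ φ) :
    ∑ j : Fin (n + 2), phiTopCoeffs α β γ (n + 2) j * φ (n + 2 - 1 - j) = φ (n + 2) := by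
  rw [Fin.sum_univ_eq_sum_range (fun j => phiTopCoeffs α β γ (n + 2) j * φ (n + 2 - 1 - j)),
    Finset.sum_range_succ', Finset.sum_range_succ']
  have hφ : φ (n + 2) = C (α (n + 1))⁻¹ * (C (α (n + 1)) * φ (n + 2)) := by
    rw [← mul_assoc, ← C_mul, inv_mul_cancel₀ hα, C_1, one_mul]
  have h := hrec (n + 1)
  rw [if_neg n.succ_ne_zero, Nat.add_sub_cancel] at h
  simp only [phiTopCoeffs, Nat.add_eq_zero_iff, one_ne_zero, and_false, and_self, ↓reduceIte,
    Nat.add_eq_right, Nat.add_one_sub_one, Nat.reduceSubDiff, zero_mul, Finset.sum_const_zero,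
    zero_add, map_mul, add_tsub_cancel_right, neg_mul, tsub_zero]
  rw [hφ, h]
  ring

theorem mPhiMat_mul_phiKron (n m : ℕ) (hα : α (n + 1) ≠ 0) (hrec : IsThreeTermRecurrence α β γ φ)
    (P : ℕ → Matrix (Fin m) (Fin m) F) :
    mPhiMat α β γ (n + 2) m P * phiKron φ (n + 2) m
      = ∑ i ∈ Finset.range (n + 2 + 1), (P i).map (fun a => φ i * C a) := by
  ext r c
  rw [phiKron_eq_colKronOne, mul_colKronOne_apply, Matrix.sum_apply, Finset.sum_range_succ]
  simp only [mPhiMat_apply, map_apply, add_mul, Finset.sum_add_distrib]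
  have hlow : ∑ j : Fin (n + 2), C (P (n + 2 - 1 - j) r c) * φ (n + 2 - 1 - j)
      = ∑ i ∈ Finset.range (n + 2), φ i * C (P i r c) := by
    rw [Fin.sum_univ_eq_sum_range (fun j => C (P (n + 2 - 1 - j) r c) * φ (n + 2 - 1 - j)),
      Finset.sum_range_reflect (fun j => C (P j r c) * φ j)]
    simp only [mul_comm]
  have htop : ∑ j : Fin (n + 2), phiTopCoeffs α β γ (n + 2) j * C (P (n + 2) r c)
        * φ (n + 2 - 1 - j) = φ (n + 2) * C (P (n + 2) r c) := by
    simp_rw [mul_right_comm _ (C (P (n + 2) r c)), ← Finset.sum_mul,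
      sum_phiTopCoeffs_mul n hα hrec]
  rw [hlow, htop]

theorem FPhiMat_mul {n : Type*} (k m : ℕ) (P : ℕ → Matrix (Fin m) (Fin m) F)
    (B : Matrix (Fin k × Fin m) n F[X]) :
    FPhiMat α β γ k m P * B = Matrix.of fun p c =>
      if h : (p.1 : ℕ) = 0 then (mPhiMat α β γ k m P * B) p.2 c
      else ((MPhiMat α β γ k ⊗ₖ (1 : Matrix (Fin m) (Fin m) F[X])) * B)
        (⟨(p.1 : ℕ) - 1, by have := p.1.isLt; omega⟩, p.2) c := by
  ext ⟨i, r⟩ c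
  by_cases hi : (i : ℕ) = 0
  · simp [Matrix.mul_apply, FPhiMat, hi]
  · simp [Matrix.mul_apply, FPhiMat, hi, one_apply]

end ThreeTermRecurrence

theorem FPhi_mul_phiKron_general
    {F : Type*} [Field F] {m k : ℕ} (hk : 2 ≤ k)
    (α β γ : ℕ → F) (hα : ∀ j, α j ≠ 0)
    (φ : ℕ → Polynomial F)
    (hrec : ∀ j : ℕ, Polynomial.C (α j) * φ (j + 1)
      = (Polynomial.X - Polynomial.C (β j)) * φ j
        - Polynomial.C (γ j) * (if j = 0 then 0 else φ (j - 1)))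
    (P : ℕ → Matrix (Fin m) (Fin m) F) :
    mPhiMat α β γ k m P * phiKron φ k m
        = ∑ i ∈ Finset.range (k + 1), (P i).map (fun a => φ i * Polynomial.C a) ∧
    (MPhiMat α β γ k ⊗ₖ (1 : Matrix (Fin m) (Fin m) (Polynomial F))) * phiKron φ k m = 0 ∧
    FPhiMat α β γ k m P * phiKron φ k m
        = Matrix.of (fun (p : Fin k × Fin m) (c : Fin m) =>
            if (p.1 : ℕ) = 0 then
              (∑ i ∈ Finset.range (k + 1), (P i).map (fun a => φ i * Polynomial.C a)) p.2 c
            else 0) := by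
  obtain ⟨n, rfl⟩ : ∃ n, k = n + 2 := ⟨k - 2, by omega⟩
  have hm := mPhiMat_mul_phiKron n m (hα (n + 1)) hrec P
  have hM := MPhiMat_kronecker_one_mul_phiKron (n + 2) m hrec
  refine ⟨hm, hM, ?_⟩
  rw [FPhiMat_mul, hm, hM]
  ext p c
  simp [dite_eq_ite]

/-- `m_Φ^P(λ)(Φ_k(λ)⊗I_m) = P(λ)`, `(M_Φ(λ)⊗I_m)(Φ_k(λ)⊗I_m) = 0`, and
consequently `F_Φ^P(λ)(Φ_k(λ)⊗I_m) = e_1 ⊗ P(λ)`. -/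
theorem FPhi_mul_phiKron
    {F : Type*} [Field F] {m k : ℕ} (hk : 2 ≤ k)
    (α β γ : ℕ → F) (hα : ∀ j, α j ≠ 0)
    (φ : ℕ → Polynomial F) (hφ0 : φ 0 = 1)
    (hrec : ∀ j : ℕ, Polynomial.C (α j) * φ (j + 1)
      = (Polynomial.X - Polynomial.C (β j)) * φ j
        - Polynomial.C (γ j) * (if j = 0 then 0 else φ (j - 1)))
    (P : ℕ → Matrix (Fin m) (Fin m) F) :
    mPhiMat α β γ k m P * phiKron φ k m
        = ∑ i ∈ Finset.range (k + 1), (P i).map (fun a => φ i * Polynomial.C a) ∧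
    (MPhiMat α β γ k ⊗ₖ (1 : Matrix (Fin m) (Fin m) (Polynomial F))) * phiKron φ k m = 0 ∧
    FPhiMat α β γ k m P * phiKron φ k m
        = Matrix.of (fun (p : Fin k × Fin m) (c : Fin m) =>
            if (p.1 : ℕ) = 0 then
              (∑ i ∈ Finset.range (k + 1), (P i).map (fun a => φ i * Polynomial.C a)) p.2 c
            else 0) :=
  FPhi_mul_phiKron_general hk α β γ hα φ hrec P
end

section
/- Let K be a field, A ∈ K^{n×n} invertible, B ∈ K^{n×m}, C ∈ K^{p×n}, D ∈ K^{p×m}; set G := D + C A^{−1} B ∈ K^{p×m} and P := [[A, B], [−C, D]] ∈ K^{(n+p)×(n+m)}. Then for all y ∈ K^n and x ∈ K^p: (y;x)^T · P = 0 if and only if y^T = x^T C A^{−1} and x^T G = 0. Moreover, the linear map x ↦ ((A^{−1})^T C^T x ; x) is a linear isomorphism from the left null space {x ∈ K^p : x^T G = 0} onto the left null space {z ∈ K^{n+p} : z^T P = 0}; in particular, x_1, …, x_q is a basis of the former if and only if ((A^{−1})^T C^T x_1 ; x_1), …, ((A^{−1})^T C^T x_q ; x_q) is a basis of the latter. -/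
/-!
The first block column of `(y;x)ᵀ P = 0` reads `yᵀ A = xᵀ C`, i.e. `yᵀ = xᵀ C A⁻¹`;
substituting this into the second block column turns it into `xᵀ (D + C A⁻¹ B) = 0`.
Hence the left kernel of `P` is the image of the left kernel of `G` under the injective
graph map `x ↦ (xᵀ C A⁻¹ ; x)`, and an injective linear map transports bases of a
subspace to bases of its image.
-/

open Matrix

namespace Matrix

variable {R : Type*} [CommRing R] {l m n : Type*} [Fintype n]

theorem vecMul_eq_iff_eq_vecMul_nonsing_inv [Fintype l] [DecidableEq l] {A : Matrix l l R}
    (hA : IsUnit A.det) (y z : l → R) : y ᵥ* A = z ↔ y = z ᵥ* A⁻¹ := by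
  constructor
  · rintro rfl
    rw [vecMul_vecMul, mul_nonsing_inv A hA, vecMul_one]
  · rintro rfl
    rw [vecMul_vecMul, nonsing_inv_mul A hA, vecMul_one]

theorem sumElim_vecMul_fromBlocks_eq_zero_iff [Fintype l] [DecidableEq l] (A : Matrix l l R)
    (B : Matrix l m R) (C : Matrix n l R) (D : Matrix n m R) (hA : IsUnit A.det) (y : l → R)
    (x : n → R) :
    Sum.elim y x ᵥ* fromBlocks A B (-C) D = 0 ↔
      y = x ᵥ* (C * A⁻¹) ∧ x ᵥ* (D + C * A⁻¹ * B) = 0 := by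
  rw [vecMul_fromBlocks, ← Sum.elim_zero_zero, Sum.elim_eq_iff, Sum.elim_comp_inl,
    Sum.elim_comp_inr, vecMul_neg, add_neg_eq_zero, vecMul_eq_iff_eq_vecMul_nonsing_inv hA,
    vecMul_vecMul]
  refine and_congr_right fun hy => ?_
  rw [vecMul_add, ← vecMul_vecMul x (C * A⁻¹), ← hy, add_comm]

def sumElimVecMulLinear (M : Matrix n l R) : (n → R) →ₗ[R] (l ⊕ n → R) where
  toFun x := Sum.elim (x ᵥ* M) x
  map_add' x x' := by rw [add_vecMul, Sum.elim_add_add]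
  map_smul' c x := by
    funext i
    cases i <;> simp [smul_vecMul]

@[simp]
theorem sumElimVecMulLinear_apply (M : Matrix n l R) (x : n → R) :
    M.sumElimVecMulLinear x = Sum.elim (x ᵥ* M) x := rfl

theorem sumElimVecMulLinear_injective (M : Matrix n l R) :
    Function.Injective M.sumElimVecMulLinear :=
  fun _ _ h => (Sum.elim_eq_iff.mp h).2

theorem map_sumElimVecMulLinear_eq {M : Matrix n l R} {S : Submodule R (n → R)}
    {T : Submodule R (l ⊕ n → R)} (h : ∀ y x, Sum.elim y x ∈ T ↔ y = x ᵥ* M ∧ x ∈ S) :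
    S.map M.sumElimVecMulLinear = T := by
  ext z
  rw [← Sum.elim_comp_inl_inr z, h, Submodule.mem_map]
  constructor
  · rintro ⟨x, hx, hxz⟩
    obtain ⟨hy, rfl⟩ := Sum.elim_eq_iff.mp hxz
    exact ⟨hy.symm, hx⟩
  · rintro ⟨hy, hx⟩
    exact ⟨_, hx, by rw [sumElimVecMulLinear_apply, hy]⟩

end Matrix

theorem LinearMap.linearIndependent_and_span_eq_map_iff {R M N ι : Type*} [Semiring R]
    [AddCommMonoid M] [AddCommMonoid N] [Module R M] [Module R N] {f : M →ₗ[R] N}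
    (hf : Function.Injective f) (S : Submodule R M) (u : ι → M) :
    (LinearIndependent R (f ∘ u) ∧ Submodule.span R (Set.range (f ∘ u)) = S.map f) ↔
      (LinearIndependent R u ∧ Submodule.span R (Set.range u) = S) := by
  rw [f.linearIndependent_iff_of_injOn hf.injOn, Set.range_comp, ← Submodule.map_span,
    (Submodule.map_injective_of_injective hf).eq_iff]

/-- Left null-space version: `(y;x)ᵀ P = 0` iff `yᵀ = xᵀ C A⁻¹` and
`xᵀ G = 0`, and the map `x ↦ ((A⁻¹)ᵀ Cᵀ x ; x)` is a linear isomorphism between the left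
null spaces of `G = D + C A⁻¹ B` and of `P = [[A, B], [-C, D]]`, with bases corresponding. -/
theorem leftKernel_equiv_systemMatrix_transferFunction
    {K : Type*} [Field K] {n m p : ℕ}
    (A : Matrix (Fin n) (Fin n) K) (B : Matrix (Fin n) (Fin m) K)
    (C : Matrix (Fin p) (Fin n) K) (D : Matrix (Fin p) (Fin m) K)
    (hA : IsUnit A.det)
    (G : Matrix (Fin p) (Fin m) K) (hG : G = D + C * A⁻¹ * B)
    (P : Matrix (Fin n ⊕ Fin p) (Fin n ⊕ Fin m) K)
    (hP : P = Matrix.fromBlocks A B (-C) D) :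
    (∀ (y : Fin n → K) (x : Fin p → K),
      Sum.elim y x ᵥ* P = 0 ↔ (y = x ᵥ* (C * A⁻¹) ∧ x ᵥ* G = 0)) ∧
    (∃ e : LinearMap.ker G.vecMulLinear ≃ₗ[K] LinearMap.ker P.vecMulLinear,
      ∀ x : LinearMap.ker G.vecMulLinear,
        (e x : Fin n ⊕ Fin p → K)
          = Sum.elim (((A⁻¹)ᵀ * Cᵀ) *ᵥ (x : Fin p → K)) (x : Fin p → K)) ∧
    (∀ (q : ℕ) (u : Fin q → (Fin p → K)),
      (LinearIndependent K u ∧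
          Submodule.span K (Set.range u) = LinearMap.ker G.vecMulLinear) ↔
      (LinearIndependent K (fun i => Sum.elim (((A⁻¹)ᵀ * Cᵀ) *ᵥ u i) (u i)) ∧
          Submodule.span K (Set.range (fun i => Sum.elim (((A⁻¹)ᵀ * Cᵀ) *ᵥ u i) (u i)))
            = LinearMap.ker P.vecMulLinear)) := by
  subst hG hP
  set f := (C * A⁻¹).sumElimVecMulLinear
  have hkey := sumElim_vecMul_fromBlocks_eq_zero_iff A B C D hA
  have hf : ∀ x, f x = Sum.elim (((A⁻¹)ᵀ * Cᵀ) *ᵥ x) x := fun x => by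
    rw [sumElimVecMulLinear_apply, ← transpose_mul, mulVec_transpose]
  have himg : (LinearMap.ker (D + C * A⁻¹ * B).vecMulLinear).map f
      = LinearMap.ker (fromBlocks A B (-C) D).vecMulLinear :=
    map_sumElimVecMulLinear_eq hkey
  refine ⟨hkey, ⟨(Submodule.equivMapOfInjective f (sumElimVecMulLinear_injective _) _).trans
    (LinearEquiv.ofEq _ _ himg), fun x => hf x⟩, fun q u => ?_⟩
  rw [show (fun i => Sum.elim (((A⁻¹)ᵀ * Cᵀ) *ᵥ u i) (u i)) = f ∘ u from
    funext fun i => (hf (u i)).symm, ← himg]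
  exact (LinearMap.linearIndependent_and_span_eq_map_iff
    (sumElimVecMulLinear_injective _) _ u).symm
end

section
/- Let F be a field, k ≥ 2, m ≥ 1, and let L(λ) = λX + Y with X, Y ∈ F^{km×km} be a pencil that is block-symmetric (L(λ)^B = L(λ) with respect to the k×k partition into m×m blocks) and satisfies L(λ)·(Φ_k(λ)⊗I_m) = 0. Then X = 0 and Y = 0, i.e., L(λ) = 0. (Equivalently: the only pencil in DM(P) with ansatz vector 0 is the zero pencil.) -/
/-!
For fixed `r, s : Fin m`, let `x`, `y` be the `k × k` matrices formed by the `(r, s)` entries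
of the `m × m` blocks of `X`, `Y`. Block symmetry makes them symmetric, and the ansatz says
`(λ x + y) Ψ(λ) = 0` with `Ψ = (φ_{k-1}, …, φ_0)`. Pairing with `Ψ(μ)` in `F[μ][λ]` gives
`λ B_x + B_y = 0` for `B_z = Ψ(μ)ᵀ z Ψ(λ)`, and since `x`, `y` are symmetric, exchanging the roles
of `λ` and `μ` gives `μ B_x + B_y = 0`. Hence `(λ - μ) B_x = 0`, so `B_x = 0`. The recurrence
only enters through `deg φ_j = j`, which makes the `φ_j` linearly independent over `F` and over
`F[μ]`; this yields `x = 0`, and then `y Ψ = 0` yields `y = 0`.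
-/

open Matrix

open Polynomial

theorem Polynomial.degree_eq_of_threeTermRecurrence {F : Type*} [Field F] {α β γ : ℕ → F}
    (hα : ∀ j, α j ≠ 0) {φ : ℕ → F[X]} (hφ0 : φ 0 = 1)
    (hrec : ∀ j : ℕ, C (α j) * φ (j + 1)
      = (X - C (β j)) * φ j - C (γ j) * (if j = 0 then 0 else φ (j - 1))) :
    ∀ j, (φ j).degree = j
  | 0 => by simp [hφ0]
  | j + 1 => by
    have hlead : ((X - C (β j)) * φ j).degree = ↑(j + 1) := by
      rw [degree_mul, degree_X_sub_C, degree_eq_of_threeTermRecurrence hα hφ0 hrec j, add_comm]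
      rfl
    have hlower : (C (γ j) * (if j = 0 then 0 else φ (j - 1))).degree < ↑(j + 1) := by
      split_ifs with hj
      · simp
      · calc _ ≤ (φ (j - 1)).degree := by rw [← smul_eq_C_mul]; exact degree_smul_le _ _
          _ = ↑(j - 1) := degree_eq_of_threeTermRecurrence hα hφ0 hrec (j - 1)
          _ < ↑(j + 1) := by exact_mod_cast (by omega : j - 1 < j + 1)
    rw [← degree_C_mul (hα j), hrec j, degree_sub_eq_left_of_degree_lt (hlead ▸ hlower), hlead]

theorem Matrix.IsSymm.dotProduct_mulVec_comm {A ι : Type*} [CommSemiring A] [Fintype ι]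
    {x : Matrix ι ι A} (hx : x.IsSymm) (u v : ι → A) : u ⬝ᵥ x *ᵥ v = v ⬝ᵥ x *ᵥ u := by
  rw [dotProduct_mulVec, ← mulVec_transpose, hx.eq, dotProduct_comm]

theorem RingHom.comp_mulVec {R A ι κ : Type*} [CommSemiring R] [CommSemiring A] [Fintype ι]
    (f : R →+* A) (M : Matrix κ ι R) (v : ι → R) : f ∘ (M *ᵥ v) = M.map f *ᵥ (f ∘ v) :=
  _root_.funext (RingHom.map_mulVec f M v)

theorem Polynomial.dotProduct_map_pencil_mulVec_eq_zero {R A ι : Type*} [CommRing R]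
    [CommRing A] [Fintype ι] (f : R[X] →+* A) {x y : Matrix ι ι R} {ψ : ι → R[X]}
    (h : (X : R[X]) • (x.map C *ᵥ ψ) + y.map C *ᵥ ψ = 0) (u : ι → A) :
    f X * (u ⬝ᵥ x.map (f.comp C) *ᵥ (f ∘ ψ)) + u ⬝ᵥ y.map (f.comp C) *ᵥ (f ∘ ψ) = 0 := by
  have hpencil : f ∘ ((X : R[X]) • (x.map C *ᵥ ψ) + y.map C *ᵥ ψ)
      = f X • (f ∘ (x.map C *ᵥ ψ)) + f ∘ (y.map C *ᵥ ψ) := by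
    ext; simp
  have := congrArg (fun v => u ⬝ᵥ (f ∘ v)) h
  simp only [hpencil, dotProduct_add, dotProduct_smul, smul_eq_mul] at this
  simpa [← Matrix.map_map, f.comp_mulVec] using this

namespace Polynomial.Sequence

noncomputable def map {R A : Type*} [Semiring R] [Semiring A] (S : Sequence R) (f : R →+* A)
    (hf : Function.Injective f) : Sequence A where
  elems' i := (S i).map f
  degree_eq' i := by rw [degree_map_eq_of_injective hf, S.degree_eq]

variable {R ι κ : Type*} [CommRing R] [IsDomain R] [Fintype ι]

theorem eq_zero_of_dotProduct_eq_zero (S : Sequence R) {e : ι → ℕ} (he : e.Injective)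
    {c : ι → R} (h : (fun i => C (c i)) ⬝ᵥ (fun i => S (e i)) = 0) : c = 0 := by
  refine _root_.funext (Fintype.linearIndependent_iff.mp (S.linearIndependent.comp e he) c ?_)
  simpa [dotProduct, smul_eq_C_mul] using h

theorem eq_zero_of_map_C_mulVec_eq_zero (S : Sequence R) {e : ι → ℕ} (he : e.Injective)
    {x : Matrix κ ι R} (h : x.map C *ᵥ (fun j => S (e j)) = 0) : x = 0 :=
  Matrix.ext fun i => congrFun (S.eq_zero_of_dotProduct_eq_zero he (congrFun h i))

theorem eq_zero_of_symm_pencil_mulVec_eq_zero (S : Sequence R) {e : ι → ℕ} (he : e.Injective)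
    {x y : Matrix ι ι R} (hx : x.IsSymm) (hy : y.IsSymm)
    (h : (X : R[X]) • (x.map C *ᵥ fun j => S (e j)) + y.map C *ᵥ (fun j => S (e j)) = 0) :
    x = 0 ∧ y = 0 := by
  set ψ := fun j => S (e j)
  -- the embeddings of `R[X]` into `R[X][X]` as polynomials in `λ = X` and in `μ = C X`
  let Λ : R[X] →+* R[X][X] := mapRingHom C
  let M : R[X] →+* R[X][X] := C
  have hΛM : Λ.comp C = M.comp C := by ext; simp [Λ, M]
  set x' := x.map (M.comp C)
  have hΛ := dotProduct_map_pencil_mulVec_eq_zero Λ h (M ∘ ψ)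
  have hM := dotProduct_map_pencil_mulVec_eq_zero M h (Λ ∘ ψ)
  rw [hΛM] at hΛ
  rw [(hx.map _).dotProduct_mulVec_comm, (hy.map _).dotProduct_mulVec_comm] at hM
  have hB : (M ∘ ψ) ⬝ᵥ x' *ᵥ (Λ ∘ ψ) = 0 := by
    have : (X - C X) * ((M ∘ ψ) ⬝ᵥ x' *ᵥ (Λ ∘ ψ)) = 0 := by
      simp only [x', Λ, M, coe_mapRingHom, map_X] at hΛ hM ⊢
      linear_combination hΛ - hM
    exact (mul_eq_zero.mp this).resolve_left (X_sub_C_ne_zero X)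
  have hcol : x.map C *ᵥ ψ = 0 := by
    apply (S.map C C_injective).eq_zero_of_dotProduct_eq_zero he
    rw [← hB, (hx.map _).dotProduct_mulVec_comm, dotProduct_comm, RingHom.coe_comp,
      ← Matrix.map_map, ← M.comp_mulVec]
    rfl
  refine ⟨S.eq_zero_of_map_C_mulVec_eq_zero he hcol, S.eq_zero_of_map_C_mulVec_eq_zero he ?_⟩
  simpa [hcol] using h

end Polynomial.Sequence

theorem blockSymmetric_pencil_ansatz_zero_general
    {F : Type*} [Field F] {m k : ℕ}
    (α β γ : ℕ → F) (hα : ∀ j, α j ≠ 0)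
    (φ : ℕ → Polynomial F) (hφ0 : φ 0 = 1)
    (hrec : ∀ j : ℕ, Polynomial.C (α j) * φ (j + 1)
      = (Polynomial.X - Polynomial.C (β j)) * φ j
        - Polynomial.C (γ j) * (if j = 0 then 0 else φ (j - 1)))
    (X Y : Matrix (Fin k × Fin m) (Fin k × Fin m) F)
    (L : Matrix (Fin k × Fin m) (Fin k × Fin m) (Polynomial F))
    (hL : L = Matrix.of fun p q => Polynomial.X * Polynomial.C (X p q) + Polynomial.C (Y p q))
    (hblocksym : ∀ (i j : Fin k) (r s : Fin m), L (i, r) (j, s) = L (j, r) (i, s))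
    (hansatz : L * phiKron φ k m = 0) :
    X = 0 ∧ Y = 0 := by
  let S : Sequence F := ⟨φ, degree_eq_of_threeTermRecurrence hα hφ0 hrec⟩
  have hX : ∀ p q, (L p q).coeff 1 = X p q := by simp [hL]
  have hY : ∀ p q, (L p q).coeff 0 = Y p q := by simp [hL]
  have hrow : ∀ p s, ∑ j : Fin k, L p (j, s) * φ (k - 1 - j) = 0 := fun p s => by
    simpa [Matrix.mul_apply, phiKron, Fintype.sum_prod_type] using congrFun (congrFun hansatz p) s
  have hblock : ∀ r s, (Matrix.of fun i j => X (i, r) (j, s)) = 0 ∧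
      (Matrix.of fun i j => Y (i, r) (j, s)) = 0 := by
    intro r s
    refine S.eq_zero_of_symm_pencil_mulVec_eq_zero (e := fun j : Fin k => k - 1 - j) ?_
      (IsSymm.ext fun i j => by simp [← hX, hblocksym])
      (IsSymm.ext fun i j => by simp [← hY, hblocksym]) ?_
    · intro i j hij
      have := i.isLt; have := j.isLt
      exact Fin.ext (by simp only at hij; omega)
    · refine _root_.funext fun i => (Eq.trans ?_ (hrow (i, r) s))
      simp only [Pi.add_apply, Pi.smul_apply, mulVec, dotProduct, smul_eq_mul, Finset.mul_sum,
        ← Finset.sum_add_distrib]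
      refine Finset.sum_congr rfl fun j _ => ?_
      simp only [Matrix.map_apply, of_apply, hL, X_mul_C, S]
      ring
  constructor <;> ext ⟨i, r⟩ ⟨j, s⟩
  · exact congrFun (congrFun (hblock r s).1 i) j
  · exact congrFun (congrFun (hblock r s).2 i) j

/-- A block-symmetric pencil `L(λ) = λX + Y ∈ F[λ]^{km×km}` with
`L(λ)(Φ_k(λ)⊗I_m) = 0` is zero: `X = 0` and `Y = 0`.  (The only pencil in `𝔻𝕄(P)` with
ansatz vector `0` is the zero pencil.) -/
theorem blockSymmetric_pencil_ansatz_zero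
    {F : Type*} [Field F] {m k : ℕ} (hk : 2 ≤ k) (hm : 1 ≤ m)
    (α β γ : ℕ → F) (hα : ∀ j, α j ≠ 0)
    (φ : ℕ → Polynomial F) (hφ0 : φ 0 = 1)
    (hrec : ∀ j : ℕ, Polynomial.C (α j) * φ (j + 1)
      = (Polynomial.X - Polynomial.C (β j)) * φ j
        - Polynomial.C (γ j) * (if j = 0 then 0 else φ (j - 1)))
    (X Y : Matrix (Fin k × Fin m) (Fin k × Fin m) F)
    (L : Matrix (Fin k × Fin m) (Fin k × Fin m) (Polynomial F))
    (hL : L = Matrix.of fun p q => Polynomial.X * Polynomial.C (X p q) + Polynomial.C (Y p q))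
    (hblocksym : ∀ (i j : Fin k) (r s : Fin m), L (i, r) (j, s) = L (j, r) (i, s))
    (hansatz : L * phiKron φ k m = 0) :
    X = 0 ∧ Y = 0 :=
  blockSymmetric_pencil_ansatz_zero_general α β γ hα φ hφ0 hrec X Y L hL hblocksym hansatz
end

section
/- Let F be a field, k ≥ 2, and let P(λ) = Σ_{i=0}^{k} P_i φ_i(λ) with P_i ∈ F^{m×m} and P_k ≠ 0 (a polynomial matrix of degree k). Then for each v ∈ F^k there is exactly one pencil L(λ) = λX + Y ∈ F[λ]^{km×km} that is block-symmetric and satisfies L(λ)·(Φ_k(λ)⊗I_m) = v ⊗ P(λ); that is, for each v ∈ F^k there is a unique pencil in DM(P) with ansatz vector v. -/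
/-!
Block symmetry and the ansatz equation both decouple over the entries `(r, s)` of the `m × m`
blocks, which reduces the theorem to `m = 1`: for symmetric `x, y ∈ F^{k×k}`, the map
`(x, y) ↦ (λx + y)Φ_k(λ)` onto `k`-tuples of polynomials of degree `≤ k` is bijective. Both sides
have dimension `k(k+1)`, and the map is injective: if `(λx + y)Φ(λ) = 0`, then
`Φ(μ)ᵀ(λx + y)Φ(λ) = 0`; exchanging `λ` and `μ` and using symmetry gives
`(λ - μ)Φ(μ)ᵀxΦ(λ) = 0`, so `x = 0` because the `φ_j` have degree `j` and are therefore linearly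
independent (also over `F[μ]`), and then `y = 0`.
-/

open Matrix

/-- The matrix `v ⊗ I_m ∈ R^{km×m}` built from a vector `v ∈ R^k`. -/
def vKron {R : Type*} [Semiring R] (k m : ℕ) (v : Fin k → R) :
    Matrix (Fin k × Fin m) (Fin m) R :=
  Matrix.of fun p j => if p.2 = j then v p.1 else 0

open Polynomial

theorem Polynomial.degree_eq_of_threeTerm {R : Type*} [CommRing R] [IsDomain R] {α β γ : ℕ → R}
    (hα : ∀ j, α j ≠ 0) {φ : ℕ → R[X]} (hφ0 : φ 0 = 1)
    (hrec : ∀ j : ℕ, C (α j) * φ (j + 1)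
      = (X - C (β j)) * φ j - C (γ j) * (if j = 0 then 0 else φ (j - 1)))
    (j : ℕ) : (φ j).degree = j := by
  induction j using Nat.strong_induction_on with
  | _ j ih =>
    rcases j with _ | j
    · simp [hφ0]
    have hlead : ((X - C (β j)) * φ j).degree = ↑(j + 1) := by
      rw [degree_mul, degree_X_sub_C, ih j (by omega)]; norm_cast; omega
    have hlow : (C (γ j) * (if j = 0 then 0 else φ (j - 1))).degree < ↑(j + 1) := by
      rw [← smul_eq_C_mul]
      refine (degree_smul_le _ _).trans_lt ?_
      split_ifs with hj
      · simp
      · rw [ih (j - 1) (by omega)]; norm_cast; omega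
    rw [← degree_C_mul (hα j), hrec, degree_sub_eq_left_of_degree_lt (hlead ▸ hlow), hlead]

theorem Polynomial.linearIndependent_comp_of_degree_eq {R : Type*} [CommRing R] [IsDomain R]
    {φ : ℕ → R[X]} (hφ : ∀ j, (φ j).degree = j) {ι : Type*} {f : ι → ℕ}
    (hf : Function.Injective f) : LinearIndependent R (φ ∘ f) :=
  (Sequence.linearIndependent ⟨φ, hφ⟩).comp f hf

theorem Polynomial.mul_X_mem_degreeLT {R : Type*} [Semiring R] {n : ℕ} {q : R[X]}
    (h : q ∈ degreeLT R n) : q * X ∈ degreeLT R (n + 1) := by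
  rw [mem_degreeLT] at *
  grw [degree_mul_le, degree_X_le]
  push_cast
  exact WithBot.add_lt_add_right (by simp) h

def Matrix.ofSym2 {ι α : Type*} (f : Sym2 ι → α) : Matrix ι ι α := of fun i j => f s(i, j)

theorem Matrix.isSymm_ofSym2 {ι α : Type*} (f : Sym2 ι → α) : (ofSym2 f).IsSymm :=
  IsSymm.ext fun _ _ => congrArg f Sym2.eq_swap

theorem Matrix.ofSym2_injective {ι α : Type*} :
    Function.Injective (ofSym2 : (Sym2 ι → α) → Matrix ι ι α) :=
  fun _ _ h => funext fun z => z.ind fun i j => congrFun (congrFun h i) j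

theorem Sym2.two_mul_card (α : Type*) [Fintype α] :
    2 * Fintype.card (Sym2 α) = Fintype.card α * (Fintype.card α + 1) := by
  rw [Sym2.card, Nat.choose_two_right, Nat.add_sub_cancel, mul_comm (_ + 1),
    Nat.mul_div_cancel' (Nat.even_mul_succ_self _).two_dvd]

def Matrix.entrySlice {ι ι' κ κ' α : Type*} (A : Matrix (ι × κ) (ι' × κ') α) (r : κ) (s : κ') :
    Matrix ι ι' α :=
  of fun i j => A (i, r) (j, s)

theorem Matrix.existsUnique_of_existsUnique_entrySlice {ι κ α : Type*}
    {Q : κ → κ → Matrix ι ι α × Matrix ι ι α → Prop} (h : ∀ r s, ∃! z, Q r s z) :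
    ∃! AB : Matrix (ι × κ) (ι × κ) α × Matrix (ι × κ) (ι × κ) α,
      ∀ r s, Q r s (entrySlice AB.1 r s, entrySlice AB.2 r s) := by
  choose z hz huniq using h
  refine ⟨(of fun p q => (z p.2 q.2).1 p.1 q.1, of fun p q => (z p.2 q.2).2 p.1 q.1), hz,
    fun AB hAB => ?_⟩
  have hslice := fun r s => huniq r s _ (hAB r s)
  exact Prod.ext (ext fun p q => congrFun (congrFun (congrArg Prod.fst (hslice p.2 q.2)) p.1) q.1)
    (ext fun p q => congrFun (congrFun (congrArg Prod.snd (hslice p.2 q.2)) p.1) q.1)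

section Pencil

variable {R : Type*} [CommRing R] {ι κ : Type*}

noncomputable def pencil (x y : Matrix ι κ R) : Matrix ι κ R[X] :=
  of fun i j => X * C (x i j) + C (y i j)

theorem pencil_injective {x y x' y' : Matrix ι κ R} (h : pencil x y = pencil x' y') :
    x = x' ∧ y = y' := by
  constructor <;> ext i j
  · simpa [pencil] using congrArg (coeff · 1) (congrFun (congrFun h i) j)
  · simpa [pencil] using congrArg (coeff · 0) (congrFun (congrFun h i) j)

theorem isSymm_pencil_iff {x y : Matrix ι ι R} : (pencil x y).IsSymm ↔ x.IsSymm ∧ y.IsSymm :=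
  ⟨pencil_injective (x := xᵀ) (y := yᵀ), fun ⟨hx, hy⟩ => by
    change pencil xᵀ yᵀ = pencil x y
    rw [hx.eq, hy.eq]⟩

theorem entrySlice_pencil {ι' κ' : Type*} (x y : Matrix (ι × κ) (ι' × κ') R) (r : κ) (s : κ') :
    entrySlice (pencil x y) r s = pencil (entrySlice x r s) (entrySlice y r s) := rfl

theorem pencil_sub (x y x' y' : Matrix ι κ R) :
    pencil (x - x') (y - y') = pencil x y - pencil x' y' := by
  refine Matrix.ext fun i j => ?_
  simp only [pencil, of_apply, Matrix.sub_apply, map_sub]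
  ring

variable [Fintype κ]

theorem pencil_mulVec_apply (x y : Matrix ι κ R) (ψ : κ → R[X]) (i : ι) :
    (pencil x y *ᵥ ψ) i = ∑ j, (X * C (x i j) + C (y i j)) * ψ j := rfl

-- Symmetric matrices are parametrized by `Sym2 κ → R`, whose dimension is known.
noncomputable def pencilMulVecₗ (ψ : κ → R[X]) :
    (Sym2 κ → R) × (Sym2 κ → R) →ₗ[R] κ → R[X] where
  toFun fg := pencil (ofSym2 fg.1) (ofSym2 fg.2) *ᵥ ψ
  map_add' fg fg' := by
    ext1 i
    simp only [pencil_mulVec_apply, ofSym2, of_apply, Prod.fst_add, Prod.snd_add, Pi.add_apply,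
      map_add, ← Finset.sum_add_distrib]
    exact Finset.sum_congr rfl fun j _ => by ring
  map_smul' c fg := by
    ext1 i
    simp only [pencil_mulVec_apply, ofSym2, of_apply, Prod.smul_fst, Prod.smul_snd,
      Pi.smul_apply, smul_eq_mul, map_mul, RingHom.id_apply, Finset.smul_sum, smul_eq_C_mul]
    exact Finset.sum_congr rfl fun j _ => by ring

theorem pencil_mulVec_mem_degreeLT {n : ℕ} {ψ : κ → R[X]} (hψ : ∀ j, ψ j ∈ degreeLT R n)
    (x y : Matrix ι κ R) (i : ι) : (pencil x y *ᵥ ψ) i ∈ degreeLT R (n + 1) := by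
  refine Submodule.sum_mem _ fun j _ => ?_
  have hx : x i j • ψ j * X ∈ degreeLT R (n + 1) :=
    mul_X_mem_degreeLT (Submodule.smul_mem _ _ (hψ j))
  have hy : y i j • ψ j ∈ degreeLT R (n + 1) :=
    degreeLT_mono n.le_succ (Submodule.smul_mem _ _ (hψ j))
  convert add_mem hx hy using 1
  simp only [pencil, of_apply, smul_eq_C_mul]
  ring

theorem Matrix.IsSymm.eq_zero_of_pencil_mulVec_eq_zero [IsDomain R] [Fintype ι] {ψ : ι → R[X]}
    (hψ : LinearIndependent R ψ) (hψX : LinearIndependent R[X] fun i => (ψ i).map C)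
    {x y : Matrix ι ι R} (hx : x.IsSymm) (hy : y.IsSymm) (h : pencil x y *ᵥ ψ = 0) :
    x = 0 ∧ y = 0 := by
  have hrow : ∀ i, ∑ j, (X * C (x i j) + C (y i j)) * ψ j = 0 := fun i => congrFun h i
  -- `λ` is the outer variable `X` and `μ` the inner variable `C X`.
  have hOuter : ∀ i, ∑ j, (X * C (C (x i j)) + C (C (y i j))) * (ψ j).map C = 0 := fun i => by
    simpa [Polynomial.map_sum] using congrArg (Polynomial.map C) (hrow i)
  have hInner : ∀ i, ∑ j, (C X * C (C (x i j)) + C (C (y i j))) * C (ψ j) = 0 := fun i => by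
    simpa only [map_sum, map_mul, map_add, map_zero] using congrArg C (hrow i)
  have key : (X - C X) * ∑ j, C (∑ i, C (x i j) * ψ i) * (ψ j).map C = 0 := by
    calc (X - C X) * ∑ j, C (∑ i, C (x i j) * ψ i) * (ψ j).map C
        = ∑ i, C (ψ i) * ∑ j, (X * C (C (x i j)) + C (C (y i j))) * (ψ j).map C
          - ∑ j, (ψ j).map C * ∑ i, (C X * C (C (x j i)) + C (C (y j i))) * C (ψ i) := by
          simp only [Finset.mul_sum, Finset.sum_mul, map_sum]
          conv_rhs => enter [1]; rw [Finset.sum_comm]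
          simp only [← Finset.sum_sub_distrib]
          refine Finset.sum_congr rfl fun j _ => Finset.sum_congr rfl fun i _ => ?_
          rw [hx.apply i j, hy.apply i j, map_mul]
          ring
      _ = 0 := by simp only [hOuter, hInner, Finset.sum_const_zero, mul_zero, sub_zero]
  have hcol : ∀ j, ∑ i, C (x i j) * ψ i = 0 := by
    have := (mul_eq_zero.mp key).resolve_left (X_sub_C_ne_zero X)
    exact Fintype.linearIndependent_iff.mp hψX _ (by simpa [smul_eq_C_mul] using this)
  have hx0 : x = 0 := by
    ext i j
    exact Fintype.linearIndependent_iff.mp hψ (x · j) (by simpa [smul_eq_C_mul] using hcol j) i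
  refine ⟨hx0, ?_⟩
  ext i j
  exact Fintype.linearIndependent_iff.mp hψ (y i) (by simpa [hx0, smul_eq_C_mul] using hrow i) j

end Pencil

section Field

variable {F : Type*} [Field F] {ι : Type*} [Fintype ι] {ψ : ι → F[X]} (hψ : LinearIndependent F ψ)
  (hψX : LinearIndependent F[X] fun i => (ψ i).map C)
  (hdeg : ∀ i, ψ i ∈ degreeLT F (Fintype.card ι))

include hψ hψX hdeg in
theorem exists_isSymm_pencil_mulVec_eq {t : ι → F[X]}
    (ht : ∀ i, t i ∈ degreeLT F (Fintype.card ι + 1)) :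
    ∃ x y : Matrix ι ι F, x.IsSymm ∧ y.IsSymm ∧ pencil x y *ᵥ ψ = t := by
  let T : (Sym2 ι → F) × (Sym2 ι → F) →ₗ[F] ι → degreeLT F (Fintype.card ι + 1) :=
    LinearMap.pi fun i => (LinearMap.proj i ∘ₗ pencilMulVecₗ ψ).codRestrict _
      fun fg => pencil_mulVec_mem_degreeLT hdeg _ _ i
  have hT : ∀ fg i, (T fg i : F[X]) = (pencil (ofSym2 fg.1) (ofSym2 fg.2) *ᵥ ψ) i :=
    fun _ _ => rfl
  have hinj : Function.Injective T := by
    refine (injective_iff_map_eq_zero T).mpr fun fg h => ?_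
    obtain ⟨h1, h2⟩ := IsSymm.eq_zero_of_pencil_mulVec_eq_zero hψ hψX (isSymm_ofSym2 fg.1)
      (isSymm_ofSym2 fg.2) (funext fun i => by simpa [hT] using congrArg Subtype.val (congrFun h i))
    exact Prod.ext (ofSym2_injective (h1.trans (by ext; rfl)))
      (ofSym2_injective (h2.trans (by ext; rfl)))
  have hdim : Module.finrank F ((Sym2 ι → F) × (Sym2 ι → F))
      = Module.finrank F (ι → degreeLT F (Fintype.card ι + 1)) := by
    simp [Module.finrank_pi_fintype, Module.finrank_eq_card_basis (degreeLT.basis F _),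
      ← Sym2.two_mul_card, two_mul]
  obtain ⟨fg, hfg⟩ := (LinearMap.injective_iff_surjective_of_finrank_eq_finrank hdim).mp hinj
    fun i => ⟨t i, ht i⟩
  exact ⟨_, _, isSymm_ofSym2 fg.1, isSymm_ofSym2 fg.2,
    funext fun i => (hT fg i).symm.trans (congrArg Subtype.val (congrFun hfg i))⟩

include hψ hψX hdeg in
theorem existsUnique_isSymm_pencil_mulVec_eq {t : ι → F[X]}
    (ht : ∀ i, t i ∈ degreeLT F (Fintype.card ι + 1)) :
    ∃! xy : Matrix ι ι F × Matrix ι ι F, xy.1.IsSymm ∧ xy.2.IsSymm ∧ pencil xy.1 xy.2 *ᵥ ψ = t := by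
  obtain ⟨x, y, hx, hy, h⟩ := exists_isSymm_pencil_mulVec_eq hψ hψX hdeg ht
  refine ⟨(x, y), ⟨hx, hy, h⟩, fun ⟨x', y'⟩ ⟨hx', hy', h'⟩ => ?_⟩
  have hdiff : pencil (x' - x) (y' - y) *ᵥ ψ = 0 := by rw [pencil_sub, sub_mulVec, h, h', sub_self]
  obtain ⟨h1, h2⟩ := IsSymm.eq_zero_of_pencil_mulVec_eq_zero hψ hψX (hx'.sub hx) (hy'.sub hy) hdiff
  exact Prod.ext (sub_eq_zero.mp h1) (sub_eq_zero.mp h2)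

theorem existsUnique_isSymm_pencil_mulVec_reverse_eq {φ : ℕ → F[X]}
    (hφ : ∀ j, (φ j).degree = j) {k : ℕ} {t : Fin k → F[X]} (ht : ∀ i, t i ∈ degreeLT F (k + 1)) :
    ∃! xy : Matrix (Fin k) (Fin k) F × Matrix (Fin k) (Fin k) F,
      xy.1.IsSymm ∧ xy.2.IsSymm ∧ (pencil xy.1 xy.2 *ᵥ fun j : Fin k => φ (k - 1 - j)) = t := by
  have hrev : Function.Injective fun j : Fin k => k - 1 - (j : ℕ) :=
    fun a b h => Fin.ext (by simp only at h; omega)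
  have hφX : ∀ j, ((φ j).map C).degree = j := fun j => by
    rw [degree_map_eq_of_injective C_injective, hφ]
  refine existsUnique_isSymm_pencil_mulVec_eq (linearIndependent_comp_of_degree_eq hφ hrev)
    (linearIndependent_comp_of_degree_eq hφX hrev) (fun j => ?_) (by simpa using ht)
  rw [Fintype.card_fin, mem_degreeLT, Function.comp_apply, hφ]
  norm_cast
  omega

end Field

theorem forall_isSymm_entrySlice_iff {ι κ α : Type*} (L : Matrix (ι × κ) (ι × κ) α) :
    (∀ r s, (entrySlice L r s).IsSymm) ↔ ∀ i j r s, L (i, r) (j, s) = L (j, r) (i, s) := by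
  simp only [IsSymm.ext_iff, entrySlice, of_apply]
  exact ⟨fun h i j r s => h r s j i, fun h r s i j => h j i r s⟩

theorem mul_phiKron_apply {F : Type*} [Field F] {k m : ℕ} (φ : ℕ → F[X])
    (L : Matrix (Fin k × Fin m) (Fin k × Fin m) F[X]) (i : Fin k) (r s : Fin m) :
    (L * phiKron φ k m) (i, r) s = (entrySlice L r s *ᵥ fun j : Fin k => φ (k - 1 - j)) i := by
  simp [mul_apply, Fintype.sum_prod_type, phiKron, entrySlice, mulVec, dotProduct]

theorem vKron_mul_apply {R : Type*} [Semiring R] {k m : ℕ} (w : Fin k → R)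
    (M : Matrix (Fin m) (Fin m) R) (i : Fin k) (r s : Fin m) :
    (vKron k m w * M) (i, r) s = w i * M r s := by
  simp [mul_apply, vKron]

theorem mul_phiKron_eq_vKron_mul_iff {F : Type*} [Field F] {k m : ℕ} (φ : ℕ → F[X])
    (L : Matrix (Fin k × Fin m) (Fin k × Fin m) F[X]) (w : Fin k → F[X])
    (M : Matrix (Fin m) (Fin m) F[X]) :
    L * phiKron φ k m = vKron k m w * M ↔
      ∀ r s, (entrySlice L r s *ᵥ fun j : Fin k => φ (k - 1 - j)) = fun i => w i * M r s := by
  simp only [← ext_iff, Prod.forall, funext_iff, mul_phiKron_apply, vKron_mul_apply]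
  exact ⟨fun h r s i => h i r s, fun h i r s => h r s i⟩

theorem existsUnique_DM_pencil_general
    {F : Type*} [Field F] {m k : ℕ}
    (α β γ : ℕ → F) (hα : ∀ j, α j ≠ 0)
    (φ : ℕ → Polynomial F) (hφ0 : φ 0 = 1)
    (hrec : ∀ j : ℕ, Polynomial.C (α j) * φ (j + 1)
      = (Polynomial.X - Polynomial.C (β j)) * φ j
        - Polynomial.C (γ j) * (if j = 0 then 0 else φ (j - 1)))
    (P : ℕ → Matrix (Fin m) (Fin m) F)
    (v : Fin k → F) :
    ∃! XY : Matrix (Fin k × Fin m) (Fin k × Fin m) F ×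
              Matrix (Fin k × Fin m) (Fin k × Fin m) F,
      (∀ (i j : Fin k) (r s : Fin m),
          (Matrix.of fun p q =>
              Polynomial.X * Polynomial.C (XY.1 p q) + Polynomial.C (XY.2 p q) :
            Matrix (Fin k × Fin m) (Fin k × Fin m) (Polynomial F)) (i, r) (j, s)
            = (Matrix.of fun p q =>
                Polynomial.X * Polynomial.C (XY.1 p q) + Polynomial.C (XY.2 p q) :
              Matrix (Fin k × Fin m) (Fin k × Fin m) (Polynomial F)) (j, r) (i, s)) ∧
      (Matrix.of fun p q =>
          Polynomial.X * Polynomial.C (XY.1 p q) + Polynomial.C (XY.2 p q) :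
        Matrix (Fin k × Fin m) (Fin k × Fin m) (Polynomial F)) * phiKron φ k m
        = vKron k m (fun i => Polynomial.C (v i)) *
            (∑ i ∈ Finset.range (k + 1), (P i).map (fun a => φ i * Polynomial.C a)) := by
  have hφ := degree_eq_of_threeTerm hα hφ0 hrec
  let M := ∑ i ∈ Finset.range (k + 1), (P i).map (fun a => φ i * Polynomial.C a)
  have hM : ∀ r s i, C (v i) * M r s ∈ degreeLT F (k + 1) := fun r s i => by
    simp only [M, Matrix.sum_apply, map_apply, mul_comm (φ _), ← smul_eq_C_mul, Finset.smul_sum]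
    refine Submodule.sum_mem _ fun t ht => Submodule.smul_mem _ _ (Submodule.smul_mem _ _ ?_)
    rw [mem_degreeLT, hφ]
    exact_mod_cast Finset.mem_range.mp ht
  refine (existsUnique_congr fun XY => ?_).mpr (existsUnique_of_existsUnique_entrySlice
    fun r s => existsUnique_isSymm_pencil_mulVec_reverse_eq hφ (hM r s))
  change (∀ i j r s, pencil XY.1 XY.2 (i, r) (j, s) = pencil XY.1 XY.2 (j, r) (i, s)) ∧
    pencil XY.1 XY.2 * phiKron φ k m = vKron k m (fun i => C (v i)) * M ↔ _
  simp only [← forall_isSymm_entrySlice_iff, entrySlice_pencil, isSymm_pencil_iff,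
    mul_phiKron_eq_vKron_mul_iff, ← forall_and, and_assoc]

/-- For a polynomial matrix `P(λ) = Σ_{i=0}^{k} P_i φ_i(λ)` of degree
`k ≥ 2` and every `v ∈ F^k` there is exactly one block-symmetric pencil `L(λ) = λX + Y`
with `L(λ)(Φ_k(λ)⊗I_m) = v ⊗ P(λ)`, i.e. exactly one pencil in `𝔻𝕄(P)` with ansatz
vector `v`. -/
theorem existsUnique_DM_pencil
    {F : Type*} [Field F] {m k : ℕ} (hk : 2 ≤ k)
    (α β γ : ℕ → F) (hα : ∀ j, α j ≠ 0)
    (φ : ℕ → Polynomial F) (hφ0 : φ 0 = 1)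
    (hrec : ∀ j : ℕ, Polynomial.C (α j) * φ (j + 1)
      = (Polynomial.X - Polynomial.C (β j)) * φ j
        - Polynomial.C (γ j) * (if j = 0 then 0 else φ (j - 1)))
    (P : ℕ → Matrix (Fin m) (Fin m) F) (hPk : P k ≠ 0)
    (v : Fin k → F) :
    ∃! XY : Matrix (Fin k × Fin m) (Fin k × Fin m) F ×
              Matrix (Fin k × Fin m) (Fin k × Fin m) F,
      (∀ (i j : Fin k) (r s : Fin m),
          (Matrix.of fun p q =>
              Polynomial.X * Polynomial.C (XY.1 p q) + Polynomial.C (XY.2 p q) :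
            Matrix (Fin k × Fin m) (Fin k × Fin m) (Polynomial F)) (i, r) (j, s)
            = (Matrix.of fun p q =>
                Polynomial.X * Polynomial.C (XY.1 p q) + Polynomial.C (XY.2 p q) :
              Matrix (Fin k × Fin m) (Fin k × Fin m) (Polynomial F)) (j, r) (i, s)) ∧
      (Matrix.of fun p q =>
          Polynomial.X * Polynomial.C (XY.1 p q) + Polynomial.C (XY.2 p q) :
        Matrix (Fin k × Fin m) (Fin k × Fin m) (Polynomial F)) * phiKron φ k m
        = vKron k m (fun i => Polynomial.C (v i)) *
            (∑ i ∈ Finset.range (k + 1), (P i).map (fun a => φ i * Polynomial.C a)) :=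
  existsUnique_DM_pencil_general α β γ hα φ hφ0 hrec P v
end
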